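/- arXiv:math/0212138 — 8 statements merged into one kernel-verified Lean document; each statement's English description precedes it below -/
import Mathlib

section
/- Let H be a group, h ∈ H non-trivial, and n ≥ 2. Write G_{(m)} = H₁ ∗ ⋯ ∗ H_m for the free product of m copies of H, and let ρₙ : Bₙ → Aut(G_{(n)}) and ρ_{n+1} : B_{n+1} → Aut(G_{(n+1)}) be the Artin type representations associated to (H,h). Let ι : Bₙ → B_{n+1} be the homomorphism sending σ_k to σ_k for k = 1, …, n−1. Then for every β ∈ Bₙ, the group Γ_{n+1}(ι(β)·σₙ) is isomorphic to Γₙ(β), where Γ_m(γ) denotes the quotient of G_{(m)} by the normal subgroup generated by { g⁻¹ · (ρ_m(γ)(g)) : g ∈ G_{(m)} }. -/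
def braidRels (m : ℕ) : Set (FreeGroup (Fin m)) :=
  { r | (∃ i j : Fin m, (i : ℕ) + 1 = (j : ℕ) ∧
          r = FreeGroup.of i * FreeGroup.of j * FreeGroup.of i *
              (FreeGroup.of j * FreeGroup.of i * FreeGroup.of j)⁻¹) ∨
        (∃ i j : Fin m, (i : ℕ) + 2 ≤ (j : ℕ) ∧
          r = FreeGroup.of i * FreeGroup.of j * (FreeGroup.of j * FreeGroup.of i)⁻¹) }

abbrev BraidGroup (m : ℕ) : Type := PresentedGroup (braidRels m)

def braidGen {m : ℕ} (i : Fin m) : BraidGroup m := PresentedGroup.of i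

def idx0 {n : ℕ} (k : Fin (n - 1)) : Fin n := ⟨k.1, by have := k.2; omega⟩
def idx1 {n : ℕ} (k : Fin (n - 1)) : Fin n := ⟨k.1 + 1, by have := k.2; omega⟩

def IsArtinRep {n : ℕ} {H : Type} [Group H] (h : H)
    (ρ : BraidGroup (n - 1) →* MulAut (Monoid.CoprodI (fun _ : Fin n => H))) : Prop :=
  ∀ k : Fin (n - 1),
    (∀ y : H, ρ (braidGen k) (Monoid.CoprodI.of (i := idx0 k) y) =
        (Monoid.CoprodI.of (i := idx0 k) h)⁻¹ * Monoid.CoprodI.of (i := idx1 k) y *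
          Monoid.CoprodI.of (i := idx0 k) h) ∧
    (∀ y : H, ρ (braidGen k) (Monoid.CoprodI.of (i := idx1 k) y) =
        Monoid.CoprodI.of (i := idx0 k) h * Monoid.CoprodI.of (i := idx0 k) y *
          (Monoid.CoprodI.of (i := idx0 k) h)⁻¹) ∧
    (∀ j : Fin n, j ≠ idx0 k → j ≠ idx1 k →
      ∀ y : H, ρ (braidGen k) (Monoid.CoprodI.of (i := j) y) = Monoid.CoprodI.of (i := j) y)

abbrev artinGamma {n : ℕ} {H : Type} [Group H]
    (ρ : BraidGroup (n - 1) →* MulAut (Monoid.CoprodI (fun _ : Fin n => H)))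
    (β : BraidGroup (n - 1)) : Type :=
  Monoid.CoprodI (fun _ : Fin n => H) ⧸
    Subgroup.normalClosure
      {x : Monoid.CoprodI (fun _ : Fin n => H) |
        ∃ g : Monoid.CoprodI (fun _ : Fin n => H), x = g⁻¹ * ρ β g}

/-!
Write `τ = ρ_(n+1)(ι β σₙ) = A σ` with `A = ρ_(n+1)(ι β)` and `σ = ρ_(n+1)(σₙ)`. Since `ι`
sends generators to generators, `A` restricts to `ρₙ(β)` on `G_(n) ⊆ G_(n+1)` and fixes the
last factor, while `σ` only moves the last two factors. Hence `τ` sends `y_(n+1)` to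
`ρₙ(β)(h yₙ h⁻¹) ∈ G_(n)`, so the last factor is redundant in `Γ_(n+1)(τ)`: the retraction
`G_(n+1) → G_(n)` fixing `G_(n)` and sending `y_(n+1) ↦ ρₙ(β)(h yₙ h⁻¹)` descends to
`Γ_(n+1)(τ) → Γₙ(β)`, and the inclusion `G_(n) → G_(n+1)` descends to its inverse. For the
latter, `x ≡ τ σ⁻¹ x = A x` for `x ∈ G_(n)`, and `σ⁻¹` only replaces `yₙ` by `h⁻¹ y_(n+1) h`,
which is congruent to `yₙ` (apply `τ` to `yₙ`).
-/

open Monoid.CoprodI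

namespace MulAut

variable {G : Type*} [Group G] (φ : MulAut G)

-- `artinGamma ρ β` is `(ρ β).Coinvariants` by definition.
abbrev Coinvariants : Type _ := G ⧸ Subgroup.normalClosure {x : G | ∃ g, x = g⁻¹ * φ g}

namespace Coinvariants

abbrev mk : G →* φ.Coinvariants := QuotientGroup.mk' _

theorem mk_apply_self (g : G) : mk φ (φ g) = mk φ g :=
  (QuotientGroup.eq.2 <|
    Subgroup.subset_normalClosure (s := {x : G | ∃ g, x = g⁻¹ * φ g}) ⟨g, rfl⟩).symm

theorem mk_map_mul_apply {B : Type*} [Group B] (ρ : B →* MulAut G) (a b : B) (g : G) :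
    mk (ρ (a * b)) (ρ a (ρ b g)) = mk (ρ (a * b)) g := by
  rw [← MulAut.mul_apply, ← map_mul, mk_apply_self]

def lift {K : Type*} [Group K] (f : G →* K) (hf : ∀ g, f (φ g) = f g) : φ.Coinvariants →* K :=
  QuotientGroup.lift _ f <| Subgroup.normalClosure_le_normal <| by
    rintro _ ⟨g, rfl⟩
    rw [SetLike.mem_coe, MonoidHom.mem_ker, map_mul, map_inv, hf, inv_mul_cancel]

end Coinvariants

end MulAut

abbrev FreeProd (n : ℕ) (H : Type) [Monoid H] : Type := Monoid.CoprodI (fun _ : Fin n => H)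

namespace FreeProd

variable {H : Type} [Monoid H] {n : ℕ}

def castSucc : FreeProd n H →* FreeProd (n + 1) H :=
  lift fun i => of (M := fun _ : Fin (n + 1) => H) (i := i.castSucc)

@[simp]
theorem castSucc_of (i : Fin n) (y : H) : castSucc (of (i := i) y) = of (i := i.castSucc) y :=
  lift_of _ _

def retract (f : H →* FreeProd n H) : FreeProd (n + 1) H →* FreeProd n H :=
  lift <| Fin.lastCases (motive := fun _ => H →* FreeProd n H) f
    fun i => of (M := fun _ : Fin n => H) (i := i)

@[simp]
theorem retract_of_castSucc (f : H →* FreeProd n H) (i : Fin n) (y : H) :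
    retract f (of (i := i.castSucc) y) = of (i := i) y := by
  rw [retract, lift_of, Fin.lastCases_castSucc]

@[simp]
theorem retract_of_last (f : H →* FreeProd n H) (y : H) :
    retract f (of (i := Fin.last n) y) = f y := by
  rw [retract, lift_of, Fin.lastCases_last]

@[simp]
theorem retract_castSucc (f : H →* FreeProd n H) (x : FreeProd n H) :
    retract f (castSucc x) = x := by
  have : (retract f).comp castSucc = .id _ := ext_hom _ _ fun i => by ext; simp
  exact DFunLike.congr_fun this x

end FreeProd

def intertwiningSubgroup {B X Y : Type*} [Group B] [Mul X] [Mul Y]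
    (ρ : B →* MulAut X) (σ : B →* MulAut Y) (e : X → Y) : Subgroup B where
  carrier := {b | ∀ x, σ b (e x) = e (ρ b x)}
  one_mem' _ := by simp
  mul_mem' {a b} ha hb x := by
    rw [map_mul, map_mul, MulAut.mul_apply, MulAut.mul_apply, hb x, ha]
  inv_mem' {a} ha x := by
    rw [map_inv, map_inv, MulAut.inv_def, MulEquiv.symm_apply_eq, ha, MulAut.apply_inv_self]

def IsStabilization {n : ℕ} (ι : BraidGroup (n - 1) →* BraidGroup (n + 1 - 1)) : Prop :=
  ∀ k : Fin (n - 1), ι (braidGen k) = braidGen (k.castLE (by omega))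

namespace IsArtinRep

variable {H : Type} [Group H] {h : H} {n : ℕ}

theorem apply_of_idx1_conj {ρ : BraidGroup (n - 1) →* MulAut (FreeProd n H)}
    (hρ : IsArtinRep h ρ) (k : Fin (n - 1)) (y : H) :
    ρ (braidGen k) (of (i := idx1 k) (h⁻¹ * y * h)) = of (i := idx0 k) y := by
  rw [(hρ k).2.1, ← map_inv, ← map_mul, ← map_mul]
  group

variable {ρ₁ : BraidGroup (n - 1) →* MulAut (FreeProd n H)}
  {ρ₂ : BraidGroup (n + 1 - 1) →* MulAut (FreeProd (n + 1) H)}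

theorem apply_castLE_castSucc (hρ₁ : IsArtinRep h ρ₁) (hρ₂ : IsArtinRep (n := n + 1) h ρ₂)
    (k : Fin (n - 1)) (x : FreeProd n H) :
    ρ₂ (braidGen (k.castLE (by omega))) (FreeProd.castSucc x) =
      FreeProd.castSucc (ρ₁ (braidGen k) x) := by
  set k' : Fin (n + 1 - 1) := k.castLE (by omega)
  have h0 : idx0 k' = (idx0 k).castSucc := rfl
  have h1 : idx1 k' = (idx1 k).castSucc := rfl
  suffices (ρ₂ (braidGen k')).toMonoidHom.comp FreeProd.castSucc =
      FreeProd.castSucc.comp (ρ₁ (braidGen k)).toMonoidHom from DFunLike.congr_fun this x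
  refine ext_hom _ _ fun i => MonoidHom.ext fun y => ?_
  simp only [MonoidHom.comp_apply, MulEquiv.coe_toMonoidHom, FreeProd.castSucc_of]
  by_cases hi0 : i = idx0 k
  · subst hi0
    rw [← h0, (hρ₂ k').1, (hρ₁ k).1]
    simp [h0, h1]
  by_cases hi1 : i = idx1 k
  · subst hi1
    rw [← h1, (hρ₂ k').2.1, (hρ₁ k).2.1]
    simp [h0]
  rw [(hρ₂ k').2.2 _ ((Fin.castSucc_injective n).ne hi0) ((Fin.castSucc_injective n).ne hi1),
    (hρ₁ k).2.2 _ hi0 hi1, FreeProd.castSucc_of]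

theorem apply_castLE_of_last (hρ₂ : IsArtinRep (n := n + 1) h ρ₂) (k : Fin (n - 1)) (y : H) :
    ρ₂ (braidGen (k.castLE (by omega))) (of (i := Fin.last n) y) = of (i := Fin.last n) y :=
  (hρ₂ _).2.2 _ (by simp [Fin.ext_iff, idx0]; omega) (by simp [Fin.ext_iff, idx1]; omega) y

variable {ι : BraidGroup (n - 1) →* BraidGroup (n + 1 - 1)}

theorem apply_stabilize_castSucc (hρ₁ : IsArtinRep h ρ₁) (hρ₂ : IsArtinRep (n := n + 1) h ρ₂)
    (hι : IsStabilization ι)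
    (b : BraidGroup (n - 1)) (x : FreeProd n H) :
    ρ₂ (ι b) (FreeProd.castSucc x) = FreeProd.castSucc (ρ₁ b x) :=
  PresentedGroup.generated_by _ (intertwiningSubgroup ρ₁ (ρ₂.comp ι) FreeProd.castSucc)
    (fun k x => by
      change ρ₂ (ι (braidGen k)) _ = FreeProd.castSucc (ρ₁ (braidGen k) x)
      rw [hι, apply_castLE_castSucc hρ₁ hρ₂]) b x

theorem apply_stabilize_of_last (hρ₂ : IsArtinRep (n := n + 1) h ρ₂)
    (hι : IsStabilization ι)
    (b : BraidGroup (n - 1)) (y : H) :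
    ρ₂ (ι b) (of (i := Fin.last n) y) = of (i := Fin.last n) y :=
  PresentedGroup.generated_by _ (intertwiningSubgroup 1 (ρ₂.comp ι) (of (i := Fin.last n)))
    (fun k y => by
      change ρ₂ (ι (braidGen k)) _ = of y
      rw [hι, apply_castLE_of_last hρ₂]) b y

end IsArtinRep

section Stabilization

variable {H : Type} [Group H] {h : H} {n : ℕ}
  {ρ₁ : BraidGroup (n - 1) →* MulAut (FreeProd n H)}
  {ρ₂ : BraidGroup (n + 1 - 1) →* MulAut (FreeProd (n + 1) H)}
  {ι : BraidGroup (n - 1) →* BraidGroup (n + 1 - 1)}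
  {s : Fin (n + 1 - 1)} {m : Fin n}

open MulAut.Coinvariants

-- Eliminates the last factor using the relation `y_(n+1) ≡ τ y_(n+1) = ρ₁ β (h yₙ h⁻¹)`.
def stabilizationRetract (h : H) (ρ₁ : BraidGroup (n - 1) →* MulAut (FreeProd n H))
    (β : BraidGroup (n - 1)) (m : Fin n) : FreeProd (n + 1) H →* FreeProd n H :=
  FreeProd.retract ((ρ₁ β).toMonoidHom.comp ((of (i := m)).comp (MulAut.conj h).toMonoidHom))

@[simp]
theorem stabilizationRetract_castSucc (β : BraidGroup (n - 1)) (x : FreeProd n H) :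
    stabilizationRetract h ρ₁ β m (FreeProd.castSucc x) = x :=
  FreeProd.retract_castSucc _ x

@[simp]
theorem stabilizationRetract_of_castSucc (β : BraidGroup (n - 1)) (i : Fin n) (y : H) :
    stabilizationRetract h ρ₁ β m (of (i := i.castSucc) y) = of (i := i) y :=
  FreeProd.retract_of_castSucc _ i y

theorem stabilizationRetract_of_last (β : BraidGroup (n - 1)) (y : H) :
    stabilizationRetract h ρ₁ β m (of (i := Fin.last n) y) = ρ₁ β (of (i := m) (h * y * h⁻¹)) :=
  FreeProd.retract_of_last _ y

theorem mk_of_idx0_eq_mk_of_last (hρ₂ : IsArtinRep (n := n + 1) h ρ₂)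
    (hι : IsStabilization ι)
    (h1 : idx1 s = Fin.last n) (β : BraidGroup (n - 1)) (w : H) :
    mk (ρ₂ (ι β * braidGen s)) (of (i := idx0 s) w) =
      mk (ρ₂ (ι β * braidGen s)) (of (i := Fin.last n) (h⁻¹ * w * h)) := by
  set π := mk (ρ₂ (ι β * braidGen s))
  have hlast := hρ₂.apply_stabilize_of_last hι β
  -- `σ` sends `h` in the last factor to `h` in the `n`-th one
  have hA : π (ρ₂ (ι β) (of (i := idx0 s) h)) = π (of (i := Fin.last n) h) := by
    rw [← hρ₂.apply_of_idx1_conj s h, h1, inv_mul_cancel, one_mul, mk_map_mul_apply]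
  calc π (of (i := idx0 s) w)
      = π (ρ₂ (ι β) (ρ₂ (braidGen s) (of (i := idx0 s) w))) := (mk_map_mul_apply _ _ _ _).symm
    _ = (π (ρ₂ (ι β) (of (i := idx0 s) h)))⁻¹ * π (of (i := Fin.last n) w) *
          π (ρ₂ (ι β) (of (i := idx0 s) h)) := by
      rw [(hρ₂ s).1, h1]
      simp only [map_mul, map_inv, hlast]
    _ = π (of (i := Fin.last n) (h⁻¹ * w * h)) := by
      rw [hA]
      simp only [map_mul, map_inv]

theorem apply_mul_braidGen_of_last (hρ₁ : IsArtinRep h ρ₁) (hρ₂ : IsArtinRep (n := n + 1) h ρ₂)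
    (hι : IsStabilization ι)
    (h0 : idx0 s = m.castSucc) (h1 : idx1 s = Fin.last n) (β : BraidGroup (n - 1)) (y : H) :
    ρ₂ (ι β * braidGen s) (of (i := Fin.last n) y) =
      FreeProd.castSucc (ρ₁ β (of (i := m) (h * y * h⁻¹))) := by
  rw [map_mul, MulAut.mul_apply, ← h1, (hρ₂ s).2.1, ← map_inv, ← map_mul, ← map_mul, h0,
    ← FreeProd.castSucc_of, hρ₁.apply_stabilize_castSucc hρ₂ hι]

theorem apply_braidGen_of_castSucc (hρ₂ : IsArtinRep (n := n + 1) h ρ₂)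
    (h0 : idx0 s = m.castSucc) (h1 : idx1 s = Fin.last n) {i : Fin n} (him : i ≠ m) (y : H) :
    ρ₂ (braidGen s) (of (i := i.castSucc) y) = of (i := i.castSucc) y :=
  (hρ₂ s).2.2 _ (by rw [h0]; exact (Fin.castSucc_injective n).ne him)
    (by rw [h1]; exact Fin.castSucc_ne_last i) y

theorem mk_castSucc_apply (hρ₁ : IsArtinRep h ρ₁) (hρ₂ : IsArtinRep (n := n + 1) h ρ₂)
    (hι : IsStabilization ι)
    (h0 : idx0 s = m.castSucc) (h1 : idx1 s = Fin.last n) (β : BraidGroup (n - 1))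
    (x : FreeProd n H) :
    mk (ρ₂ (ι β * braidGen s)) (FreeProd.castSucc (ρ₁ β x)) =
      mk (ρ₂ (ι β * braidGen s)) (FreeProd.castSucc x) := by
  set π := mk (ρ₂ (ι β * braidGen s))
  rw [← hρ₁.apply_stabilize_castSucc hρ₂ hι]
  suffices (π.comp (ρ₂ (ι β)).toMonoidHom).comp FreeProd.castSucc = π.comp FreeProd.castSucc from
    DFunLike.congr_fun this x
  refine ext_hom _ _ fun i => MonoidHom.ext fun y => ?_
  simp only [MonoidHom.comp_apply, MulEquiv.coe_toMonoidHom, FreeProd.castSucc_of]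
  by_cases him : i = m
  · subst him
    rw [← h0, mk_of_idx0_eq_mk_of_last hρ₂ hι h1, ← h1, ← hρ₂.apply_of_idx1_conj s y,
      mk_map_mul_apply]
  · conv_lhs => rw [← apply_braidGen_of_castSucc hρ₂ h0 h1 him]
    exact mk_map_mul_apply _ _ _ _

theorem mk_stabilizationRetract_apply (hρ₁ : IsArtinRep h ρ₁)
    (hρ₂ : IsArtinRep (n := n + 1) h ρ₂)
    (hι : IsStabilization ι)
    (h0 : idx0 s = m.castSucc) (h1 : idx1 s = Fin.last n) (β : BraidGroup (n - 1))
    (g : FreeProd (n + 1) H) :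
    mk (ρ₁ β) (stabilizationRetract h ρ₁ β m (ρ₂ (ι β * braidGen s) g)) =
      mk (ρ₁ β) (stabilizationRetract h ρ₁ β m g) := by
  suffices ((mk (ρ₁ β)).comp (stabilizationRetract h ρ₁ β m)).comp
      (ρ₂ (ι β * braidGen s)).toMonoidHom = (mk (ρ₁ β)).comp (stabilizationRetract h ρ₁ β m) from
    DFunLike.congr_fun this g
  refine ext_hom _ _ fun j => MonoidHom.ext fun y => ?_
  simp only [MonoidHom.comp_apply, MulEquiv.coe_toMonoidHom]
  have hA : ∀ i y, ρ₂ (ι β) (of (i := i.castSucc) y) = FreeProd.castSucc (ρ₁ β (of (i := i) y)) :=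
    fun i y => by rw [← FreeProd.castSucc_of, hρ₁.apply_stabilize_castSucc hρ₂ hι]
  induction j using Fin.lastCases with
  | last =>
    rw [apply_mul_braidGen_of_last hρ₁ hρ₂ hι h0 h1, stabilizationRetract_castSucc,
      stabilizationRetract_of_last]
  | cast i =>
    by_cases him : i = m
    · subst him
      have hτ : ρ₂ (ι β * braidGen s) (of (i := i.castSucc) y) =
          (FreeProd.castSucc (ρ₁ β (of (i := i) h)))⁻¹ * of (i := Fin.last n) y *
            FreeProd.castSucc (ρ₁ β (of (i := i) h)) := by
        rw [← h0, map_mul, MulAut.mul_apply, (hρ₂ s).1, h1, h0]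
        simp only [map_mul, map_inv, hρ₂.apply_stabilize_of_last hι, hA]
      rw [hτ]
      simp only [map_mul, map_inv, stabilizationRetract_castSucc, stabilizationRetract_of_last,
        stabilizationRetract_of_castSucc, mk_apply_self]
      group
    · rw [map_mul, MulAut.mul_apply, apply_braidGen_of_castSucc hρ₂ h0 h1 him, hA,
        stabilizationRetract_castSucc, stabilizationRetract_of_castSucc, mk_apply_self]

theorem mk_castSucc_stabilizationRetract (hρ₁ : IsArtinRep h ρ₁)
    (hρ₂ : IsArtinRep (n := n + 1) h ρ₂)
    (hι : IsStabilization ι)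
    (h0 : idx0 s = m.castSucc) (h1 : idx1 s = Fin.last n) (β : BraidGroup (n - 1))
    (g : FreeProd (n + 1) H) :
    mk (ρ₂ (ι β * braidGen s)) (FreeProd.castSucc (stabilizationRetract h ρ₁ β m g)) =
      mk (ρ₂ (ι β * braidGen s)) g := by
  suffices ((mk (ρ₂ (ι β * braidGen s))).comp FreeProd.castSucc).comp
      (stabilizationRetract h ρ₁ β m) = mk (ρ₂ (ι β * braidGen s)) from DFunLike.congr_fun this g
  refine ext_hom _ _ fun j => MonoidHom.ext fun y => ?_
  simp only [MonoidHom.comp_apply]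
  induction j using Fin.lastCases with
  | last =>
    rw [stabilizationRetract_of_last, ← apply_mul_braidGen_of_last hρ₁ hρ₂ hι h0 h1,
      mk_apply_self]
  | cast i => rw [stabilizationRetract_of_castSucc, FreeProd.castSucc_of]

end Stabilization

theorem gamma_stabilization_pos {H : Type} [Group H] (h : H) (n : ℕ) (hn : 2 ≤ n)
    (ρ₁ : BraidGroup (n - 1) →* MulAut (Monoid.CoprodI (fun _ : Fin n => H)))
    (hρ₁ : IsArtinRep h ρ₁)
    (ρ₂ : BraidGroup (n + 1 - 1) →* MulAut (Monoid.CoprodI (fun _ : Fin (n + 1) => H)))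
    (hρ₂ : IsArtinRep (n := n + 1) h ρ₂)
    (ι : BraidGroup (n - 1) →* BraidGroup (n + 1 - 1))
    (hι : ∀ k : Fin (n - 1),
      ι (braidGen k) = braidGen (⟨k.1, by have := k.2; omega⟩ : Fin (n + 1 - 1)))
    (β : BraidGroup (n - 1)) :
    Nonempty (artinGamma (n := n + 1) ρ₂
        (ι β * braidGen (⟨n - 1, by omega⟩ : Fin (n + 1 - 1))) ≃*
      artinGamma ρ₁ β) := by
  set s : Fin (n + 1 - 1) := ⟨n - 1, by omega⟩
  set m : Fin n := ⟨n - 1, by omega⟩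
  have h0 : idx0 s = m.castSucc := rfl
  have h1 : idx1 s = Fin.last n := Fin.ext (by simp [idx1, s]; omega)
  let Φ := MulAut.Coinvariants.lift (ρ₂ (ι β * braidGen s)) 
    ((MulAut.Coinvariants.mk (ρ₁ β)).comp (stabilizationRetract h ρ₁ β m))
    (mk_stabilizationRetract_apply hρ₁ hρ₂ hι h0 h1 β)
  let Ψ := MulAut.Coinvariants.lift (ρ₁ β) ((MulAut.Coinvariants.mk (ρ₂ (ι β * braidGen s))).comp FreeProd.castSucc)
    (mk_castSucc_apply hρ₁ hρ₂ hι h0 h1 β)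
  refine ⟨Φ.toMulEquiv Ψ ?_ ?_⟩
  · exact QuotientGroup.monoidHom_ext _ <| MonoidHom.ext <|
      mk_castSucc_stabilizationRetract hρ₁ hρ₂ hι h0 h1 β
  · exact QuotientGroup.monoidHom_ext _ <| MonoidHom.ext fun x =>
      congrArg (MulAut.Coinvariants.mk (ρ₁ β)) (stabilizationRetract_castSucc β x)
end

section
/- Let H be a group, h ∈ H non-trivial, n ≥ 2, G = H₁ ∗ ⋯ ∗ Hₙ the free product of n copies of H, and ρ : Bₙ → Aut(G) the Artin type representation associated to (H,h). Set G′ = H₂ ∗ ⋯ ∗ Hₙ, so that G = H₁ ∗ G′. Let u ∈ G be an element whose normal form with respect to the decomposition G = H₁ ∗ G′ starts with h₁⁻¹ and ends with h₁ (i.e., in the unique alternating reduced expression of u as a product of non-trivial elements alternately from H₁ and G′, the first factor is the element h₁⁻¹ of H₁ and the last factor is the element h₁ of H₁). Then the normal form of ρ(σ₁)(u) with respect to the decomposition G = H₁ ∗ G′ also starts with h₁⁻¹ and ends with h₁. -/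
/-- `u` has (free-product) normal form with respect to the decomposition `G = H₁ ∗ G′`
which starts with `h₁⁻¹` and ends with `h₁`: it can be written as an alternating reduced
word `h₁⁻¹ · w₀ · v₀ · w₁ · v₁ ⋯ w_{m-1} · h₁` with the `wᵢ` non-trivial elements of `G′`
and the `vᵢ` (for `i < m-1`) non-trivial elements of `H₁`. -/
def NFStartsEnds {G : Type} [Group G] (H1 G' : Subgroup G) (h1 : G) (u : G) : Prop :=
  ∃ (m : ℕ) (w v : ℕ → G), 1 ≤ m ∧
    (∀ i < m, w i ∈ G' ∧ w i ≠ 1) ∧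
    (∀ i, i + 1 < m → v i ∈ H1 ∧ v i ≠ 1) ∧
    v (m - 1) = h1 ∧
    u = h1⁻¹ * ((List.range m).map (fun i => w i * v i)).prod

/-!
Write `hₖ` for the copy of `h` in the `k`-th factor and let `τ` be `ρ σₖ` followed by conjugation
by `hₖ`. If `u = hₖ⁻¹ g hₖ` with `g` alternating between `∗_{j ≠ k} Hⱼ` and `Hₖ`, then `τ` maps
`Hₖ` onto `Hₖ₊₁` and `∗_{j ≠ k} Hⱼ` into `∗_{j ≠ k+1} Hⱼ`, so `τ g` alternates in the same way with
respect to `Hₖ₊₁`, and `ρ σₖ u = hₖ⁻¹ (hₖ₊₁⁻¹ (τ g) hₖ₊₁) hₖ`. The reduced word of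
`hₖ₊₁⁻¹ (τ g) hₖ₊₁` begins and ends with a letter of `Hₖ₊₁`, hence outside `Hₖ`, and cutting it at
its letters from `Hₖ` exhibits it as alternating with respect to `Hₖ`.
-/

section Alternating

variable {K K' : Type*} [Group K] [Group K']

inductive IsAlternatingProd (A C : Subgroup K) : K → Prop
  | single {c : K} : c ∈ C → c ≠ 1 → IsAlternatingProd A C c
  | cons {c a g : K} : c ∈ C → c ≠ 1 → a ∈ A → a ≠ 1 → IsAlternatingProd A C g →
      IsAlternatingProd A C (c * a * g)

theorem IsAlternatingProd.map {A C : Subgroup K} {A' C' : Subgroup K'} {f : K →* K'}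
    (hf : Function.Injective f) (hA : A ≤ A'.comap f) (hC : C ≤ C'.comap f) {g : K}
    (hg : IsAlternatingProd A C g) : IsAlternatingProd A' C' (f g) := by
  induction hg with
  | single hc hc1 => exact .single (hC hc) ((map_ne_one_iff f hf).2 hc1)
  | cons hc hc1 ha ha1 _ ih =>
    rw [map_mul, map_mul]
    exact .cons (hC hc) ((map_ne_one_iff f hf).2 hc1) (hA ha) ((map_ne_one_iff f hf).2 ha1) ih

end Alternating

theorem NFStartsEnds.exists_isAlternatingProd {K : Type} [Group K] {A C : Subgroup K} {x u : K}
    (hu : NFStartsEnds A C x u) : ∃ g, IsAlternatingProd A C g ∧ u = x⁻¹ * g * x := by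
  obtain ⟨m, w, v, hm, hw, hv, hvx, rfl⟩ := hu
  suffices IsAlternatingProd A C (((List.range m).map fun i => w i * v i).prod * (v (m - 1))⁻¹) by
    exact ⟨_, this, by rw [hvx]; group⟩
  clear hvx
  induction m generalizing w v with
  | zero => omega
  | succ m ih =>
    rcases Nat.eq_zero_or_pos m with rfl | hm
    · simpa using IsAlternatingProd.single (hw 0 one_pos).1 (hw 0 one_pos).2
    · have htail := ih (fun i => w (i + 1)) (fun i => v (i + 1)) hm
        (fun i hi => hw (i + 1) (by omega)) (fun i hi => hv (i + 1) (by omega))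
      rw [Nat.sub_add_cancel hm] at htail
      rw [List.prod_range_succ', Nat.add_sub_cancel, mul_assoc]
      obtain ⟨hw0, hw01⟩ := hw 0 (by omega)
      obtain ⟨hv0, hv01⟩ := hv 0 (by omega)
      exact .cons hw0 hw01 hv0 hv01 htail

theorem IsAlternatingProd.nfStartsEnds {K : Type} [Group K] {A C : Subgroup K} {g : K}
    (hg : IsAlternatingProd A C g) (x : K) : NFStartsEnds A C x (x⁻¹ * g * x) := by
  suffices ∃ (m : ℕ) (w v : ℕ → K), 1 ≤ m ∧ (∀ i < m, w i ∈ C ∧ w i ≠ 1) ∧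
      (∀ i, i + 1 < m → v i ∈ A ∧ v i ≠ 1) ∧ v (m - 1) = x ∧
      g * x = ((List.range m).map fun i => w i * v i).prod by
    obtain ⟨m, w, v, hm, hw, hv, hvx, hprod⟩ := this
    exact ⟨m, w, v, hm, hw, hv, hvx, by rw [mul_assoc, hprod]⟩
  induction hg with
  | @single c hc hc1 =>
    exact ⟨1, fun _ => c, fun _ => x, le_rfl, by simp [hc, hc1], by simp, rfl, by simp⟩
  | @cons c a g hc hc1 ha ha1 _ ih =>
    obtain ⟨m, w, v, hm, hw, hv, hvx, hprod⟩ := ih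
    refine ⟨m + 1, fun | 0 => c | i + 1 => w i, fun | 0 => a | i + 1 => v i, by omega,
      ?_, ?_, ?_, ?_⟩
    · rintro (_ | i) hi
      exacts [⟨hc, hc1⟩, hw i (by omega)]
    · rintro (_ | i) hi
      exacts [⟨ha, ha1⟩, hv i (by omega)]
    · obtain ⟨m, rfl⟩ := Nat.exists_eq_add_of_le' hm
      exact hvx
    · rw [List.prod_range_succ', mul_assoc, hprod, mul_assoc]

namespace Monoid.CoprodI

variable {ι : Type*} {G : ι → Type*} [∀ i, Group (G i)]

def IsReduced (L : List (Σ i, G i)) : Prop :=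
  (∀ l ∈ L, l.2 ≠ 1) ∧ L.IsChain fun l l' => l.1 ≠ l'.1

def listProd (L : List (Σ i, G i)) : CoprodI G :=
  (L.map fun l => of l.2).prod

@[simp] theorem listProd_nil : listProd ([] : List (Σ i, G i)) = 1 := rfl

@[simp] theorem listProd_cons (l : Σ i, G i) (L : List (Σ i, G i)) :
    listProd (l :: L) = of l.2 * listProd L :=
  List.prod_cons

@[simp] theorem listProd_append (L₁ L₂ : List (Σ i, G i)) :
    listProd (L₁ ++ L₂) = listProd L₁ * listProd L₂ := by
  simp [listProd]

theorem isReduced_singleton {i : ι} {y : G i} (hy : y ≠ 1) : IsReduced [⟨i, y⟩] :=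
  ⟨by simpa using hy, List.isChain_singleton _⟩

theorem IsReduced.append {L₁ L₂ : List (Σ i, G i)} (h₁ : IsReduced L₁) (h₂ : IsReduced L₂)
    (h : ∀ a ∈ L₁.getLast?, ∀ b ∈ L₂.head?, a.1 ≠ b.1) : IsReduced (L₁ ++ L₂) :=
  ⟨by simpa [or_imp, forall_and] using And.intro h₁.1 h₂.1, List.isChain_append.2 ⟨h₁.2, h₂.2, h⟩⟩

theorem IsReduced.infix {L₁ L : List (Σ i, G i)} (h : IsReduced L) (h' : L₁ <:+: L) :
    IsReduced L₁ :=
  ⟨fun l hl => h.1 l (h'.subset hl), h.2.infix h'⟩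

theorem IsReduced.listProd_ne_one {L : List (Σ i, G i)} (hL : IsReduced L) (hne : L ≠ []) :
    listProd L ≠ 1 := by
  classical
  intro h1
  have : (⟨L, hL.1, hL.2⟩ : Word G) = .empty := Word.equiv.symm.injective h1
  exact hne (congrArg Word.toList this)

theorem of_mem_iSup_range {p : ι → Prop} {j : ι} (hj : p j) (y : G j) :
    of y ∈ ⨆ (k) (_ : p k), (of : G k →* CoprodI G).range :=
  Subgroup.mem_iSup_of_mem j (Subgroup.mem_iSup_of_mem hj ⟨y, rfl⟩)

theorem listProd_mem_iSup_range {p : ι → Prop} {L : List (Σ i, G i)} (hL : ∀ l ∈ L, p l.1) :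
    listProd L ∈ ⨆ (k) (_ : p k), (of : G k →* CoprodI G).range := by
  induction L with
  | nil => exact Subgroup.one_mem _
  | cons l L ih =>
    simp only [List.forall_mem_cons] at hL
    exact Subgroup.mul_mem _ (of_mem_iSup_range hL.1 l.2) (ih hL.2)

theorem Word.forall_mem_smul_toList [DecidableEq ι] [∀ i, DecidableEq (G i)] {p : ι → Prop}
    {x : CoprodI G} (hx : x ∈ ⨆ (k) (_ : p k), (of : G k →* CoprodI G).range) :
    ∀ w : Word G, (∀ l ∈ w.toList, p l.1) → ∀ l ∈ (x • w).toList, p l.1 := by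
  refine Subgroup.iSup_induction _ (C := fun x => ∀ w : Word G, (∀ l ∈ w.toList, p l.1) →
    ∀ l ∈ (x • w).toList, p l.1) hx (fun j x hx => ?_) (by simp) fun x y hx hy w hw => ?_
  · by_cases hj : p j
    · rw [iSup_pos hj] at hx
      obtain ⟨y, rfl⟩ := hx
      rintro w hw ⟨k, m⟩ hl
      rcases Word.mem_smul_iff.1 hl with ⟨-, hl⟩ | ⟨-, rfl, -⟩
      exacts [hw _ hl, hj]
    · rw [iSup_neg hj, Subgroup.mem_bot] at hx
      simp [hx]
  · rw [mul_smul]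
    exact hx _ (hy w hw)

theorem exists_isReduced_of_mem_iSup_range {p : ι → Prop} {g : CoprodI G}
    (hg : g ∈ ⨆ (k) (_ : p k), (of : G k →* CoprodI G).range) :
    ∃ L : List (Σ i, G i), IsReduced L ∧ (∀ l ∈ L, p l.1) ∧ listProd L = g := by
  classical
  exact ⟨(Word.equiv g).toList, ⟨Word.ne_one _, Word.chain_ne _⟩,
    Word.forall_mem_smul_toList hg _ (by simp [Word.empty]), Word.equiv.symm_apply_apply g⟩

theorem exists_isReduced_of_isAlternatingProd {i : ι} {g : CoprodI G}
    (hg : IsAlternatingProd (of : G i →* CoprodI G).range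
      (⨆ (k) (_ : k ≠ i), (of : G k →* CoprodI G).range) g) :
    ∃ L : List (Σ i, G i), IsReduced L ∧ L ≠ [] ∧ (∀ l ∈ L.head?, l.1 ≠ i) ∧
      (∀ l ∈ L.getLast?, l.1 ≠ i) ∧ listProd L = g := by
  induction hg with
  | single hc hc1 =>
    obtain ⟨L, hL, hLi, rfl⟩ := exists_isReduced_of_mem_iSup_range hc
    refine ⟨L, hL, fun h => hc1 (by simp [h]), fun l hl => hLi l (List.mem_of_mem_head? hl),
      fun l hl => hLi l (List.mem_of_mem_getLast? hl), rfl⟩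
  | cons hc hc1 ha ha1 _ ih =>
    obtain ⟨L, hL, hLi, rfl⟩ := exists_isReduced_of_mem_iSup_range hc
    obtain ⟨y, rfl⟩ := ha
    obtain ⟨M, hM, hMne, hMhead, hMlast, rfl⟩ := ih
    have hLne : L ≠ [] := fun h => hc1 (by simp [h])
    refine ⟨L ++ ⟨i, y⟩ :: M, ?_, by simp, ?_, ?_, by simp [mul_assoc]⟩
    · refine hL.append (.append (isReduced_singleton fun h => ha1 (by simp [h])) hM ?_) ?_
      · simpa [eq_comm] using hMhead
      · simpa using fun l hl => hLi l (List.mem_of_mem_getLast? hl)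
    · rw [List.head?_append_of_ne_nil _ hLne]
      exact fun l hl => hLi l (List.mem_of_mem_head? hl)
    · rwa [List.getLast?_append_of_ne_nil _ (by simp), List.getLast?_cons_of_ne_nil hMne]

theorem IsReduced.isAlternatingProd {i : ι} {L : List (Σ i, G i)} (hL : IsReduced L)
    (hne : L ≠ []) (hhead : ∀ l ∈ L.head?, l.1 ≠ i) (hlast : ∀ l ∈ L.getLast?, l.1 ≠ i) :
    IsAlternatingProd (of : G i →* CoprodI G).range
      (⨆ (k) (_ : k ≠ i), (of : G k →* CoprodI G).range) (listProd L) := by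
  classical
  induction hlen : L.length using Nat.strong_induction_on generalizing L with
  | _ N ih =>
  -- `L = r ++ t`, where `r` is the longest prefix of `L` with no letter from `G i`
  set q : (Σ j, G j) → Bool := fun l => decide (l.1 ≠ i)
  have hsplit : L.takeWhile q ++ L.dropWhile q = L := List.takeWhile_append_dropWhile
  set r := L.takeWhile q
  have hr : ∀ l ∈ r, l.1 ≠ i := fun l hl => by simpa [q] using List.mem_takeWhile_imp hl
  have hrne : r ≠ [] := by
    obtain ⟨a, L', rfl⟩ := List.exists_cons_of_ne_nil hne
    simp [r, List.takeWhile_cons_of_pos (p := q) (by simpa [q] using hhead a rfl)]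
  have hrC := listProd_mem_iSup_range (p := (· ≠ i)) hr
  have hr1 := (hL.infix (List.takeWhile_prefix q).isInfix).listProd_ne_one hrne
  rcases ht : L.dropWhile q with _ | ⟨⟨j, y⟩, t⟩
  · rw [ht, List.append_nil] at hsplit
    rw [← hsplit]
    exact .single hrC hr1
  · have hj : j = i := by
      have := List.head_dropWhile_not q (l := L) (by simp [ht])
      simp only [ht, List.head_cons] at this
      simpa [q] using this
    subst hj
    rw [ht] at hsplit
    have hyt : IsReduced (⟨j, y⟩ :: t) :=
      hL.infix (by rw [← hsplit]; exact (List.suffix_append _ _).isInfix)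
    have htne : t ≠ [] := by
      rintro rfl
      exact hlast ⟨j, y⟩ (by rw [← hsplit]; simp) rfl
    have hy1 : of y ≠ 1 := (map_ne_one_iff _ (of_injective j)).2 (hyt.1 ⟨j, y⟩ List.mem_cons_self)
    have hlt : t.length < N := by
      rw [← hlen, ← hsplit]
      simp only [List.length_append, List.length_cons]
      omega
    have htail := ih t.length hlt (hyt.infix (List.suffix_cons _ _).isInfix) htne
      (fun l hl h => List.isChain_cons.1 hyt.2 |>.1 l hl h.symm)
      (by rwa [← hsplit, List.getLast?_append_of_ne_nil _ (by simp),
        List.getLast?_cons_of_ne_nil htne] at hlast) rfl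
    rw [← hsplit, listProd_append, listProd_cons, ← mul_assoc]
    exact .cons hrC hr1 ⟨y, rfl⟩ hy1 htail

theorem isAlternatingProd_inv_of_mul_mul_of {i j : ι} (hij : i ≠ j) {y : G j} (hy : y ≠ 1)
    {g : CoprodI G} (hg : IsAlternatingProd (of : G j →* CoprodI G).range
      (⨆ (k) (_ : k ≠ j), (of : G k →* CoprodI G).range) g) :
    IsAlternatingProd (of : G i →* CoprodI G).range
      (⨆ (k) (_ : k ≠ i), (of : G k →* CoprodI G).range) ((of y)⁻¹ * g * of y) := by
  obtain ⟨L, hL, hLne, hhead, hlast, rfl⟩ := exists_isReduced_of_isAlternatingProd hg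
  have hW : IsReduced ([⟨j, y⁻¹⟩] ++ (L ++ [⟨j, y⟩])) := by
    refine (isReduced_singleton (inv_ne_one.2 hy)).append
      (hL.append (isReduced_singleton hy) ?_) ?_
    · simpa using hlast
    · rw [List.head?_append_of_ne_nil _ hLne]
      simpa [eq_comm] using hhead
  simpa [mul_assoc] using hW.isAlternatingProd (i := i) (by simp) (by simpa using hij.symm)
    (by rw [← List.append_assoc, List.getLast?_concat]; simpa using hij.symm)

end Monoid.CoprodI

theorem idx0_ne_idx1 {n : ℕ} (k : Fin (n - 1)) : idx0 k ≠ idx1 k := by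
  simp [idx0, idx1, Fin.ext_iff]

namespace IsArtinRep

open Monoid.CoprodI

def conjBraidGen {n : ℕ} {H : Type} [Group H] (h : H)
    (ρ : BraidGroup (n - 1) →* MulAut (Monoid.CoprodI (fun _ : Fin n => H))) (k : Fin (n - 1)) :
    MulAut (Monoid.CoprodI (fun _ : Fin n => H)) :=
  MulAut.conj (of (i := idx0 k) h) * ρ (braidGen k)

variable {n : ℕ} {H : Type} [Group H] {h : H}
  {ρ : BraidGroup (n - 1) →* MulAut (Monoid.CoprodI (fun _ : Fin n => H))}

theorem conjBraidGen_apply (k : Fin (n - 1)) (x : Monoid.CoprodI (fun _ : Fin n => H)) :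
    conjBraidGen h ρ k x = of (i := idx0 k) h * ρ (braidGen k) x * (of (i := idx0 k) h)⁻¹ :=
  rfl

theorem range_of_idx0_le_comap_conjBraidGen (hρ : IsArtinRep h ρ) (k : Fin (n - 1)) :
    (of (M := fun _ : Fin n => H) (i := idx0 k)).range ≤
      (of (i := idx1 k)).range.comap (conjBraidGen h ρ k).toMonoidHom := by
  rintro _ ⟨y, rfl⟩
  refine ⟨y, ?_⟩
  rw [MulEquiv.coe_toMonoidHom, conjBraidGen_apply, (hρ k).1 y]
  group

theorem iSup_range_of_ne_idx0_le_comap_conjBraidGen (hρ : IsArtinRep h ρ) (k : Fin (n - 1)) :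
    ⨆ (j) (_ : j ≠ idx0 k), (of (M := fun _ : Fin n => H) (i := j)).range ≤
      (⨆ (j) (_ : j ≠ idx1 k), (of (i := j)).range).comap (conjBraidGen h ρ k).toMonoidHom := by
  set C := ⨆ (j) (_ : j ≠ idx1 k), (of (M := fun _ : Fin n => H) (i := j)).range
  have hC (j : Fin n) (hj : j ≠ idx1 k) (y : H) : of (i := j) y ∈ C :=
    of_mem_iSup_range (G := fun _ : Fin n => H) (p := (· ≠ idx1 k)) hj y
  have hk := hC _ (idx0_ne_idx1 k) h
  refine iSup₂_le fun j hj => ?_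
  rintro _ ⟨y, rfl⟩
  rw [Subgroup.mem_comap, MulEquiv.coe_toMonoidHom, conjBraidGen_apply]
  refine C.mul_mem (C.mul_mem hk ?_) (C.inv_mem hk)
  by_cases hj1 : j = idx1 k
  · subst hj1
    rw [(hρ k).2.1 y]
    exact C.mul_mem (C.mul_mem hk (hC _ (idx0_ne_idx1 k) y)) (C.inv_mem hk)
  · rw [(hρ k).2.2 j hj hj1 y]
    exact hC j hj1 y

theorem nfStartsEnds_apply_braidGen (hρ : IsArtinRep h ρ) (hh : h ≠ 1) (k : Fin (n - 1))
    {u : Monoid.CoprodI (fun _ : Fin n => H)}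
    (hu : NFStartsEnds (of (M := fun _ : Fin n => H) (i := idx0 k)).range
      (⨆ (j) (_ : j ≠ idx0 k), (of (M := fun _ : Fin n => H) (i := j)).range)
      (of (i := idx0 k) h) u) :
    NFStartsEnds (of (M := fun _ : Fin n => H) (i := idx0 k)).range
      (⨆ (j) (_ : j ≠ idx0 k), (of (M := fun _ : Fin n => H) (i := j)).range)
      (of (i := idx0 k) h) (ρ (braidGen k) u) := by
  obtain ⟨g, hg, rfl⟩ := hu.exists_isAlternatingProd
  have hτg := hg.map (conjBraidGen h ρ k).injective (hρ.range_of_idx0_le_comap_conjBraidGen k)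
    (hρ.iSup_range_of_ne_idx0_le_comap_conjBraidGen k)
  convert (isAlternatingProd_inv_of_mul_mul_of (idx0_ne_idx1 k) hh hτg).nfStartsEnds
    (of (i := idx0 k) h) using 1
  simp only [MulEquiv.coe_toMonoidHom, conjBraidGen_apply, map_mul, map_inv, (hρ k).1 h]
  group

end IsArtinRep

theorem nf_starts_ends_sigma1 {H : Type} [Group H] (h : H) (hh : h ≠ 1) (n : ℕ) (hn : 2 ≤ n)
    (ρ : BraidGroup (n - 1) →* MulAut (Monoid.CoprodI (fun _ : Fin n => H)))
    (hρ : IsArtinRep h ρ)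
    (u : Monoid.CoprodI (fun _ : Fin n => H))
    (hu : NFStartsEnds
      (MonoidHom.range (Monoid.CoprodI.of (M := fun _ : Fin n => H) (i := ⟨0, by omega⟩)))
      (⨆ (j : Fin n) (_ : j ≠ (⟨0, by omega⟩ : Fin n)),
        MonoidHom.range (Monoid.CoprodI.of (M := fun _ : Fin n => H) (i := j)))
      (Monoid.CoprodI.of (i := (⟨0, by omega⟩ : Fin n)) h) u) :
    NFStartsEnds
      (MonoidHom.range (Monoid.CoprodI.of (M := fun _ : Fin n => H) (i := ⟨0, by omega⟩)))
      (⨆ (j : Fin n) (_ : j ≠ (⟨0, by omega⟩ : Fin n)),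
        MonoidHom.range (Monoid.CoprodI.of (M := fun _ : Fin n => H) (i := j)))
      (Monoid.CoprodI.of (i := (⟨0, by omega⟩ : Fin n)) h)
      (ρ (braidGen (⟨0, by omega⟩ : Fin (n - 1))) u) :=
  hρ.nfStartsEnds_apply_braidGen hh ⟨0, by omega⟩ hu
end

section
/- Let H be a group, h ∈ H non-trivial, n ≥ 3, G = H₁ ∗ ⋯ ∗ Hₙ the free product of n copies of H, and ρ : Bₙ → Aut(G) the Artin type representation associated to (H,h). Set G′ = H₂ ∗ ⋯ ∗ Hₙ, so that G = H₁ ∗ G′. Let u ∈ G be an element whose normal form with respect to the decomposition G = H₁ ∗ G′ starts with h₁⁻¹ and ends with h₁. Then for every k ∈ {2, …, n−1} and every ε ∈ {+1, −1}, the normal form of ρ(σ_k^ε)(u) with respect to the decomposition G = H₁ ∗ G′ also starts with h₁⁻¹ and ends with h₁. -/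
/-! For `k ≥ 2` the automorphism `ρ(σ_k)` fixes `H₁` pointwise and maps `G′` onto itself.
Automorphisms with these two properties form a subgroup of `Aut(G)`, so `ρ(σ_k^ε)` has them
too, and such an automorphism `φ` sends a normal form `h₁⁻¹ w₁ v₁ ⋯ w_m h₁` (`wᵢ ∈ G′`,
`vᵢ ∈ H₁`) to the normal form `h₁⁻¹ φ(w₁) v₁ ⋯ φ(w_m) h₁` of the same shape. -/

open Monoid CoprodI MulAction Pointwise

theorem NFStartsEnds.map_mulAut {G : Type} [Group G] {H1 G' : Subgroup G} {h1 u : G}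
    (hu : NFStartsEnds H1 G' h1 u) {φ : MulAut G} (hH1 : ∀ x ∈ H1, φ x = x) (hh1 : h1 ∈ H1)
    (hG' : ∀ g ∈ G', φ g ∈ G') :
    NFStartsEnds H1 G' h1 (φ u) := by
  obtain ⟨m, w, v, hm, hw, hv, hlast, rfl⟩ := hu
  have hφv : ∀ i < m, φ (v i) = v i := by
    intro i hi
    by_cases hlt : i + 1 < m
    · exact hH1 _ (hv i hlt).1
    · obtain rfl : i = m - 1 := by omega
      rw [hlast]
      exact hH1 _ hh1
  refine ⟨m, fun i => φ (w i), v, hm, fun i hi => ⟨hG' _ (hw i hi).1, ?_⟩, hv, hlast, ?_⟩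
  · exact (map_ne_one_iff φ φ.injective).2 (hw i hi).2
  · rw [map_mul, map_inv, hH1 _ hh1, map_list_prod, List.map_map]
    congr 2
    refine List.map_congr_left fun i hi => ?_
    simp [hφv i (List.mem_range.1 hi)]

section CoprodI

variable {ι : Type*} {M : ι → Type*} [∀ i, Group (M i)]

theorem Monoid.CoprodI.of_mem_iSup_range_of_ne {i₀ j : ι} (hj : j ≠ i₀) (y : M j) :
    of y ∈ ⨆ (j : ι) (_ : j ≠ i₀), (of (M := M) (i := j)).range :=
  Subgroup.mem_iSup_of_mem j (Subgroup.mem_iSup_of_mem hj ⟨y, rfl⟩)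

theorem Monoid.CoprodI.iSup_range_of_ne_le {i₀ : ι} {K : Subgroup (CoprodI M)}
    (hK : ∀ j, j ≠ i₀ → ∀ y : M j, of y ∈ K) :
    (⨆ (j : ι) (_ : j ≠ i₀), (of (M := M) (i := j)).range) ≤ K :=
  iSup₂_le fun j hj => by
    rintro _ ⟨y, rfl⟩
    exact hK j hj y

end CoprodI

section ArtinRep

variable {H : Type} [Group H] {n : ℕ} {h : H}
  {ρ : BraidGroup (n - 1) →* MulAut (CoprodI fun _ : Fin n => H)}

theorem IsArtinRep.apply_of_idx1_self (hρ : IsArtinRep h ρ) (k : Fin (n - 1)) :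
    ρ (braidGen k) (of (i := idx1 k) h) = of (i := idx0 k) h := by
  rw [(hρ k).2.1 h, mul_inv_cancel_right]

theorem IsArtinRep.mem_fixingSubgroup (hρ : IsArtinRep h ρ) {k : Fin (n - 1)} {j₀ : Fin n}
    (h0 : j₀ ≠ idx0 k) (h1 : j₀ ≠ idx1 k) :
    ρ (braidGen k) ∈
      fixingSubgroup (MulAut _) (SetLike.coe (of (M := fun _ : Fin n => H) (i := j₀)).range) := by
  rw [mem_fixingSubgroup_iff]
  rintro _ ⟨y, rfl⟩
  exact (hρ k).2.2 j₀ h0 h1 y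

theorem IsArtinRep.smul_iSup_range_of_ne_le (hρ : IsArtinRep h ρ) {k : Fin (n - 1)}
    {j₀ : Fin n} (h0 : j₀ ≠ idx0 k) (h1 : j₀ ≠ idx1 k) :
    ρ (braidGen k) •
        (⨆ (j : Fin n) (_ : j ≠ j₀), (of (M := fun _ : Fin n => H) (i := j)).range) ≤
      ⨆ (j : Fin n) (_ : j ≠ j₀), (of (M := fun _ : Fin n => H) (i := j)).range := by
  set G' := ⨆ (j : Fin n) (_ : j ≠ j₀), (of (M := fun _ : Fin n => H) (i := j)).range
  have mem : ∀ {j : Fin n}, j ≠ j₀ → ∀ y : H, of (i := j) y ∈ G' :=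
    fun hj y => of_mem_iSup_range_of_ne (M := fun _ : Fin n => H) hj y
  change G'.map (ρ (braidGen k)).toMonoidHom ≤ G'
  refine Subgroup.map_le_iff_le_comap.2 (iSup_range_of_ne_le fun j hj y => ?_)
  show ρ (braidGen k) (of y) ∈ G'
  by_cases hj0 : j = idx0 k
  · subst hj0
    rw [(hρ k).1 y]
    exact mul_mem (mul_mem (inv_mem (mem h0.symm h)) (mem h1.symm y)) (mem h0.symm h)
  by_cases hj1 : j = idx1 k
  · subst hj1
    rw [(hρ k).2.1 y]
    exact mul_mem (mul_mem (mem h0.symm h) (mem h0.symm y)) (inv_mem (mem h0.symm h))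
  rw [(hρ k).2.2 j hj0 hj1 y]
  exact mem hj y

theorem IsArtinRep.iSup_range_of_ne_le_smul (hρ : IsArtinRep h ρ) {k : Fin (n - 1)}
    {j₀ : Fin n} (h0 : j₀ ≠ idx0 k) (h1 : j₀ ≠ idx1 k) :
    ⨆ (j : Fin n) (_ : j ≠ j₀), (of (M := fun _ : Fin n => H) (i := j)).range ≤
      ρ (braidGen k) •
        ⨆ (j : Fin n) (_ : j ≠ j₀), (of (M := fun _ : Fin n => H) (i := j)).range := by
  set G' := ⨆ (j : Fin n) (_ : j ≠ j₀), (of (M := fun _ : Fin n => H) (i := j)).range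
  have mem : ∀ {j : Fin n}, j ≠ j₀ → ∀ y : H, of (i := j) y ∈ G' :=
    fun hj y => of_mem_iSup_range_of_ne (M := fun _ : Fin n => H) hj y
  refine iSup_range_of_ne_le fun j hj y => ?_
  rw [Subgroup.mem_smul_pointwise_iff_exists]
  by_cases hj0 : j = idx0 k
  · subst hj0
    refine ⟨(of (i := idx1 k) h)⁻¹ * of y * of h,
      mul_mem (mul_mem (inv_mem (mem h1.symm h)) (mem h1.symm y)) (mem h1.symm h), ?_⟩
    rw [MulAut.smul_def, map_mul, map_mul, map_inv, (hρ k).2.1 y, hρ.apply_of_idx1_self]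
    group
  by_cases hj1 : j = idx1 k
  · subst hj1
    refine ⟨of (i := idx1 k) h * of (i := idx0 k) y * (of h)⁻¹,
      mul_mem (mul_mem (mem h1.symm h) (mem h0.symm y)) (inv_mem (mem h1.symm h)), ?_⟩
    rw [MulAut.smul_def, map_mul, map_mul, map_inv, (hρ k).1 y, hρ.apply_of_idx1_self]
    group
  exact ⟨of y, mem hj y, (hρ k).2.2 j hj0 hj1 y⟩

theorem IsArtinRep.mem_stabilizer (hρ : IsArtinRep h ρ) {k : Fin (n - 1)} {j₀ : Fin n}
    (h0 : j₀ ≠ idx0 k) (h1 : j₀ ≠ idx1 k) :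
    ρ (braidGen k) ∈ stabilizer (MulAut _)
      (⨆ (j : Fin n) (_ : j ≠ j₀), (of (M := fun _ : Fin n => H) (i := j)).range) :=
  mem_stabilizer_iff.2 <|
    le_antisymm (hρ.smul_iSup_range_of_ne_le h0 h1) (hρ.iSup_range_of_ne_le_smul h0 h1)

end ArtinRep

theorem nf_starts_ends_sigmak {H : Type} [Group H] (h : H) (n : ℕ) (hn : 3 ≤ n)
    (ρ : BraidGroup (n - 1) →* MulAut (Monoid.CoprodI (fun _ : Fin n => H)))
    (hρ : IsArtinRep h ρ)
    (u : Monoid.CoprodI (fun _ : Fin n => H))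
    (hu : NFStartsEnds
      (MonoidHom.range (Monoid.CoprodI.of (M := fun _ : Fin n => H) (i := ⟨0, by omega⟩)))
      (⨆ (j : Fin n) (_ : j ≠ (⟨0, by omega⟩ : Fin n)),
        MonoidHom.range (Monoid.CoprodI.of (M := fun _ : Fin n => H) (i := j)))
      (Monoid.CoprodI.of (i := (⟨0, by omega⟩ : Fin n)) h) u)
    (k : Fin (n - 1)) (hk : 1 ≤ (k : ℕ)) (ε : ℤ) :
    NFStartsEnds
      (MonoidHom.range (Monoid.CoprodI.of (M := fun _ : Fin n => H) (i := ⟨0, by omega⟩)))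
      (⨆ (j : Fin n) (_ : j ≠ (⟨0, by omega⟩ : Fin n)),
        MonoidHom.range (Monoid.CoprodI.of (M := fun _ : Fin n => H) (i := j)))
      (Monoid.CoprodI.of (i := (⟨0, by omega⟩ : Fin n)) h)
      (ρ ((braidGen k) ^ ε) u) := by
  have h0 : (⟨0, by omega⟩ : Fin n) ≠ idx0 k := by
    simp only [idx0, ne_eq, Fin.ext_iff]
    omega
  have h1 : (⟨0, by omega⟩ : Fin n) ≠ idx1 k := by simp [idx1, Fin.ext_iff]
  have hfix := zpow_mem (hρ.mem_fixingSubgroup h0 h1) ε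
  have hstab := zpow_mem (hρ.mem_stabilizer h0 h1) ε
  rw [map_zpow]
  refine hu.map_mulAut (fun x hx => (mem_fixingSubgroup_iff _).1 hfix x hx) ⟨h, rfl⟩
    fun g hg => ?_
  rw [← mem_stabilizer_iff.1 hstab]
  exact Subgroup.smul_mem_pointwise_smul g _ _ hg
end

section
/- Let H be a group, h ∈ H non-trivial, G = H₁ ∗ H₂ the free product of two copies of H, and ρ : B₂ → Aut(G) the Artin type representation associated to (H,h). Then for every l ∈ ℤ with l ≠ 0, ρ(σ₁^{2l})(h₁) = (h₂h₁)^{−l} h₁ (h₂h₁)^{l} and this element is different from h₁; and for every l ∈ ℤ, ρ(σ₁^{2l+1})(h₁) = (h₂h₁)^{−l} h₁⁻¹ h₂ h₁ (h₂h₁)^{l} and this element is different from h₁. Consequently the representation ρ : B₂ → Aut(H₁ ∗ H₂) is faithful. -/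
/-!
Write `a = h₁`, `b = h₂`, `c = b a` and `τ = ρ σ₁`. Then `τ a = a⁻¹ b a` and `τ b = a`, so `τ`
fixes `c` and `τ² a = c⁻¹ a c`, which gives both formulas. The odd images are conjugates of `b`,
so the projection `H₁ ∗ H₂ → H₂` separates them from `a`. For the even images, `a` commuting with
`c ^ l` (we may take `l > 0`) would make the nonempty reduced word `(b a) ^ l (b⁻¹ a⁻¹) ^ l`
trivial. Since `B₂` is cyclic, `ρ(σ₁ ^ k)` moves `h₁` for every `k ≠ 0`, and `ρ` is faithful.
-/

namespace MulAut

variable {G : Type*} [Group G]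

theorem zpow_apply_of_apply_eq_conj {ψ : MulAut G} {a c : G} (hc : ψ c = c)
    (ha : ψ a = c⁻¹ * a * c) (k : ℤ) : (ψ ^ k) a = c ^ (-k) * a * c ^ k := by
  have hstab : ψ ∈ MulAction.stabilizer (MulAut G) c := hc
  have hck : ∀ n : ℤ, (ψ ^ n) c = c := fun n => Subgroup.zpow_mem _ hstab n
  have hstep : ∀ n : ℤ, (ψ ^ (n + 1)) a = c⁻¹ * (ψ ^ n) a * c := fun n => by
    rw [zpow_add_one, mul_apply, ha, map_mul, map_mul, map_inv, hck]
  induction k using Int.induction_on with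
  | zero => simp
  | succ n ih => rw [hstep, ih]; group
  | pred n ih =>
    rw [← sub_add_cancel (-(n : ℤ)) 1, hstep] at ih
    calc (ψ ^ (-(n : ℤ) - 1)) a = c * (c⁻¹ * (ψ ^ (-(n : ℤ) - 1)) a * c) * c⁻¹ := by group
      _ = c ^ (-(-(n : ℤ) - 1)) * a * c ^ (-(n : ℤ) - 1) := by rw [ih]; group

variable {φ : MulAut G} {a b : G}

theorem zpow_two_mul_apply_of_braid (ha : φ a = a⁻¹ * b * a) (hb : φ b = a) (l : ℤ) :
    (φ ^ (2 * l)) a = (b * a) ^ (-l) * a * (b * a) ^ l := by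
  have hc : φ (b * a) = b * a := by rw [map_mul, ha, hb]; group
  rw [zpow_mul]
  refine zpow_apply_of_apply_eq_conj (by rw [zpow_two, mul_apply, hc, hc]) ?_ l
  rw [zpow_two, mul_apply, ha, map_mul, map_mul, map_inv, ha, hb]
  group

theorem zpow_two_mul_add_one_apply_of_braid (ha : φ a = a⁻¹ * b * a) (hb : φ b = a) (l : ℤ) :
    (φ ^ (2 * l + 1)) a = (b * a) ^ (-l) * (a⁻¹ * b * a) * (b * a) ^ l := by
  have hc : φ (b * a) = b * a := by rw [map_mul, ha, hb]; group
  rw [add_comm, zpow_one_add, mul_apply, zpow_two_mul_apply_of_braid ha hb, map_mul, map_mul,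
    map_zpow, map_zpow, hc, ha]

end MulAut

namespace Monoid.CoprodI

section Monoid

variable {ι : Type*} {M : ι → Type*} [∀ i, Monoid (M i)] {i j : ι}

theorem NeWord.prod_ne_one (w : NeWord M i j) : w.prod ≠ 1 := by
  classical
  intro hw
  have : w.toWord = Word.empty :=
    Word.equiv.symm.injective (hw.trans Word.prod_empty.symm)
  exact w.toList_ne_nil (congrArg Word.toList this)

theorem NeWord.exists_prod_eq_pow (hij : i ≠ j) {x : M i} {y : M j} (hx : x ≠ 1) (hy : y ≠ 1)
    (n : ℕ) : ∃ w : NeWord M i j, w.prod = (of x * of y) ^ (n + 1) := by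
  induction n with
  | zero => exact ⟨.append (.singleton x hx) hij (.singleton y hy), by simp⟩
  | succ n ih =>
    obtain ⟨w, hw⟩ := ih
    exact ⟨.append (.append (.singleton x hx) hij (.singleton y hy)) hij.symm w,
      by simp [hw, pow_succ']⟩

end Monoid

variable {ι : Type*} {M : ι → Type*} [∀ i, Group (M i)] {i j : ι}

theorem not_commute_of_of_mul_of_pow_succ (hij : i ≠ j) {x : M i} {y : M j} (hx : x ≠ 1)
    (hy : y ≠ 1) (n : ℕ) : ¬Commute (of x) ((of y * of x) ^ (n + 1)) := by
  intro hcomm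
  obtain ⟨w₁, hw₁⟩ := NeWord.exists_prod_eq_pow hij.symm hy hx n
  obtain ⟨w₂, hw₂⟩ := NeWord.exists_prod_eq_pow hij.symm (inv_ne_one.2 hy) (inv_ne_one.2 hx) n
  apply (w₁.append hij w₂).prod_ne_one
  have hconj : (of y⁻¹ * of x⁻¹ : CoprodI M) = of x * (of y * of x)⁻¹ * (of x)⁻¹ := by
    simp only [map_inv]; group
  rw [NeWord.append_prod, hw₁, hw₂, hconj, conj_pow, inv_pow, hcomm.inv_right.eq]
  group

theorem zpow_neg_mul_of_mul_zpow_ne (hij : i ≠ j) {x : M i} {y : M j} (hx : x ≠ 1)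
    (hy : y ≠ 1) {l : ℤ} (hl : l ≠ 0) :
    (of y * of x) ^ (-l) * of x * (of y * of x) ^ l ≠ of x := by
  intro h
  have hcomm : Commute (of x) ((of y * of x) ^ l) :=
    calc of x * (of y * of x) ^ l
        = (of y * of x) ^ l * ((of y * of x) ^ (-l) * of x * (of y * of x) ^ l) := by group
      _ = (of y * of x) ^ l * of x := by rw [h]
  obtain ⟨n, rfl | rfl⟩ := Int.eq_nat_or_neg l
  all_goals
    obtain ⟨m, rfl⟩ := Nat.exists_eq_succ_of_ne_zero (by omega : n ≠ 0)
    simp only [zpow_neg, zpow_natCast, Commute.inv_right_iff] at hcomm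
    exact not_commute_of_of_mul_of_pow_succ hij hx hy m hcomm

theorem inv_mul_of_mul_ne_of (hij : i ≠ j) (x : M i) {y : M j} (hy : y ≠ 1) (g : CoprodI M) :
    g⁻¹ * of y * g ≠ of x := by
  classical
  intro h
  set π : CoprodI M →* M j := lift (Pi.mulSingle j (MonoidHom.id (M j)))
  exact hy (by
    simpa [π, Pi.mulSingle_eq_of_ne hij, mul_assoc, inv_mul_eq_one, right_eq_mul] using
      congrArg π h)

end Monoid.CoprodI

theorem PresentedGroup.zpowers_of_eq_top {α : Type*} [Unique α] (rels : Set (FreeGroup α)) :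
    Subgroup.zpowers (of (rels := rels) default) = ⊤ := by
  rw [Subgroup.zpowers_eq_closure, ← Set.range_unique, closure_range_of]

theorem MonoidHom.injective_of_zpowers_eq_top {G K : Type*} [Group G] [Group K] {g : G}
    (hg : Subgroup.zpowers g = ⊤) (f : G →* K) (hf : ∀ k : ℤ, f (g ^ k) = 1 → k = 0) :
    Function.Injective f := by
  refine (injective_iff_map_eq_one f).2 fun x hx => ?_
  obtain ⟨k, rfl⟩ := Subgroup.mem_zpowers_iff.1 (hg ▸ Subgroup.mem_top x)
  rw [hf k hx, zpow_zero]

theorem artin_rep_B2 {H : Type} [Group H] (h : H) (hh : h ≠ 1)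
    (ρ : BraidGroup (2 - 1) →* MulAut (Monoid.CoprodI (fun _ : Fin 2 => H)))
    (hρ : IsArtinRep (n := 2) h ρ) :
    (∀ l : ℤ, l ≠ 0 →
      ρ (braidGen (⟨0, by omega⟩ : Fin (2 - 1)) ^ (2 * l))
          (Monoid.CoprodI.of (i := (0 : Fin 2)) h) =
        (Monoid.CoprodI.of (i := (1 : Fin 2)) h * Monoid.CoprodI.of (i := (0 : Fin 2)) h) ^ (-l) *
          Monoid.CoprodI.of (i := (0 : Fin 2)) h *
          (Monoid.CoprodI.of (i := (1 : Fin 2)) h * Monoid.CoprodI.of (i := (0 : Fin 2)) h) ^ l ∧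
      ρ (braidGen (⟨0, by omega⟩ : Fin (2 - 1)) ^ (2 * l))
          (Monoid.CoprodI.of (i := (0 : Fin 2)) h) ≠
        Monoid.CoprodI.of (i := (0 : Fin 2)) h) ∧
    (∀ l : ℤ,
      ρ (braidGen (⟨0, by omega⟩ : Fin (2 - 1)) ^ (2 * l + 1))
          (Monoid.CoprodI.of (i := (0 : Fin 2)) h) =
        (Monoid.CoprodI.of (i := (1 : Fin 2)) h * Monoid.CoprodI.of (i := (0 : Fin 2)) h) ^ (-l) *
          ((Monoid.CoprodI.of (i := (0 : Fin 2)) h)⁻¹ * Monoid.CoprodI.of (i := (1 : Fin 2)) h *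
            Monoid.CoprodI.of (i := (0 : Fin 2)) h) *
          (Monoid.CoprodI.of (i := (1 : Fin 2)) h * Monoid.CoprodI.of (i := (0 : Fin 2)) h) ^ l ∧
      ρ (braidGen (⟨0, by omega⟩ : Fin (2 - 1)) ^ (2 * l + 1))
          (Monoid.CoprodI.of (i := (0 : Fin 2)) h) ≠
        Monoid.CoprodI.of (i := (0 : Fin 2)) h) ∧
    Function.Injective ρ := by
  obtain ⟨hσ₀, hσ₁, -⟩ := hρ ⟨0, by omega⟩
  set σ := braidGen (⟨0, by omega⟩ : Fin (2 - 1))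
  set a : Monoid.CoprodI (fun _ : Fin 2 => H) := Monoid.CoprodI.of (i := (0 : Fin 2)) h
  set b : Monoid.CoprodI (fun _ : Fin 2 => H) := Monoid.CoprodI.of (i := (1 : Fin 2)) h
  have ha : ρ σ a = a⁻¹ * b * a := hσ₀ h
  have hb : ρ σ b = a := (hσ₁ h).trans (mul_inv_cancel_right a a)
  have heven (l : ℤ) : ρ (σ ^ (2 * l)) a = (b * a) ^ (-l) * a * (b * a) ^ l := by
    rw [map_zpow, MulAut.zpow_two_mul_apply_of_braid ha hb]
  have hodd (l : ℤ) : ρ (σ ^ (2 * l + 1)) a = (b * a) ^ (-l) * (a⁻¹ * b * a) * (b * a) ^ l := by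
    rw [map_zpow, MulAut.zpow_two_mul_add_one_apply_of_braid ha hb]
  have h01 : (0 : Fin 2) ≠ 1 := by decide
  have hne_even (l : ℤ) (hl : l ≠ 0) : ρ (σ ^ (2 * l)) a ≠ a :=
    heven l ▸ Monoid.CoprodI.zpow_neg_mul_of_mul_zpow_ne h01 hh hh hl
  have hne_odd (l : ℤ) : ρ (σ ^ (2 * l + 1)) a ≠ a := by
    have hconj : ρ (σ ^ (2 * l + 1)) a = (a * (b * a) ^ l)⁻¹ * b * (a * (b * a) ^ l) := by
      rw [hodd]; group
    rw [hconj]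
    exact Monoid.CoprodI.inv_mul_of_mul_ne_of (M := fun _ => H) h01 h hh _
  have hσ : Subgroup.zpowers σ = ⊤ := @PresentedGroup.zpowers_of_eq_top _ Fin.instUnique _
  refine ⟨fun l hl => ⟨heven l, hne_even l hl⟩, fun l => ⟨hodd l, hne_odd l⟩,
    MonoidHom.injective_of_zpowers_eq_top hσ ρ fun k hk => ?_⟩
  obtain ⟨l, rfl | rfl⟩ := Int.even_or_odd' k
  · by_contra hl
    exact hne_even l (by omega) (DFunLike.congr_fun hk a)
  · exact absurd (DFunLike.congr_fun hk a) (hne_odd l)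
end

section
/- Let M be a cancellative atomic monoid with atom set A, and let Δ ∈ M be such that L(Δ) := {x ∈ M : x ≤_L Δ} generates M as a monoid. Define R(Δ) := {x ∈ M : x ≤_R Δ}. Then the following four conditions are equivalent: (1) L(Δ) = R(Δ); (2) {aΔ : a ∈ A} = {Δa : a ∈ A}; (3) {wΔ : w ∈ M} = {Δw : w ∈ M}; (4) there exists a monoid automorphism τ : M → M such that wΔ = Δτ(w) for all w ∈ M. -/
/-!
Write `slideRight Δ` for the submonoid of those `w` with `w Δ ∈ Δ M`, and `slideLeft Δ` for
those with `Δ w ∈ M Δ`; condition (3) says that both are all of `M`. Since they are submonoids,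
it suffices to check this on generators: on `L(Δ)` when `L(Δ) = R(Δ)` (if `x y = Δ` then `y` is
again a left divisor `y z = Δ`, so `x Δ = x y z = Δ z`), and on the atoms under (2). Under (3),
cancellativity turns `w Δ = Δ τ(w)` into a definition of an automorphism `τ`. Conversely `τ`
maps atoms to atoms, giving (2), and moves divisors of `Δ` across it: `x y = Δ` forces
`y τ(x) = Δ` and `τ⁻¹(y) x = Δ`, giving (1).
-/

/-- Left divisibility in a monoid: `a ≤_L b`. -/
def leftDvd {M : Type*} [Monoid M] (a b : M) : Prop := ∃ c, a * c = b

/-- Right divisibility in a monoid: `a ≤_R b`. -/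
def rightDvd {M : Type*} [Monoid M] (a b : M) : Prop := ∃ c, c * a = b

/-- A monoid is atomic if it admits a norm `ν : M → ℕ`. -/
def IsAtomicMonoid (M : Type*) [Monoid M] : Prop :=
  ∃ ν : M → ℕ, (∀ a, ν a = 0 ↔ a = 1) ∧ ∀ a b, ν a + ν b ≤ ν (a * b)

/-- An atom of a monoid: a non-trivial indecomposable element. -/
def IsAtomElem {M : Type*} [Monoid M] (a : M) : Prop :=
  a ≠ 1 ∧ ∀ b c, a = b * c → b = 1 ∨ c = 1

section Monoid

variable {M : Type*} [Monoid M]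

theorem closure_isAtomElem_eq_top (hat : IsAtomicMonoid M) :
    Submonoid.closure {a : M | IsAtomElem a} = ⊤ := by
  obtain ⟨ν, hν0, hνmul⟩ := hat
  refine (Submonoid.eq_top_iff' _).2 fun a => ?_
  induction hn : ν a using Nat.strong_induction_on generalizing a with
  | _ n ih =>
    by_cases ha1 : a = 1
    · exact ha1 ▸ Submonoid.one_mem _
    by_cases hsplit : ∀ b c, a = b * c → b = 1 ∨ c = 1
    · exact Submonoid.subset_closure ⟨ha1, hsplit⟩
    push Not at hsplit
    obtain ⟨b, c, rfl, hb, hc⟩ := hsplit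
    have hνb := mt (hν0 b).1 hb
    have hνc := mt (hν0 c).1 hc
    have hνbc := hνmul b c
    exact Submonoid.mul_mem _ (ih (ν b) (by omega) b rfl) (ih (ν c) (by omega) c rfl)

theorem IsAtomElem.map {N : Type*} [Monoid N] {a : M} (ha : IsAtomElem a) (τ : M ≃* N) :
    IsAtomElem (τ a) := by
  refine ⟨(map_ne_one_iff τ τ.injective).2 ha.1, fun b c hbc => ?_⟩
  have : a = τ.symm b * τ.symm c := by rw [← map_mul, ← hbc, MulEquiv.symm_apply_apply]
  simpa using ha.2 _ _ this

theorem MulEquiv.image_isAtomElem (τ : M ≃* M) :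
    τ '' {a : M | IsAtomElem a} = {a : M | IsAtomElem a} := by
  ext b
  refine ⟨?_, fun hb => ⟨τ.symm b, hb.map τ.symm, τ.apply_symm_apply b⟩⟩
  rintro ⟨a, ha, rfl⟩
  exact ha.map τ

def slideRight (Δ : M) : Submonoid M where
  carrier := {w | ∃ c, w * Δ = Δ * c}
  one_mem' := ⟨1, by simp⟩
  mul_mem' := by
    rintro x y ⟨c, hc⟩ ⟨d, hd⟩
    exact ⟨c * d, by rw [mul_assoc, hd, ← mul_assoc, hc, mul_assoc]⟩

def slideLeft (Δ : M) : Submonoid M where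
  carrier := {w | ∃ c, Δ * w = c * Δ}
  one_mem' := ⟨1, by simp⟩
  mul_mem' := by
    rintro x y ⟨c, hc⟩ ⟨d, hd⟩
    exact ⟨c * d, by rw [← mul_assoc, hc, mul_assoc, hd, ← mul_assoc]⟩

variable {Δ : M}

theorem mem_slideRight {w : M} : w ∈ slideRight Δ ↔ ∃ c, w * Δ = Δ * c := Iff.rfl

theorem mem_slideLeft {w : M} : w ∈ slideLeft Δ ↔ ∃ c, Δ * w = c * Δ := Iff.rfl

theorem subset_slideRight_of_image_eq {s : Set M}
    (h : (· * Δ) '' s = (Δ * ·) '' s) : s ⊆ slideRight Δ := by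
  intro w hw
  obtain ⟨c, -, hc⟩ : w * Δ ∈ (Δ * ·) '' s := h ▸ Set.mem_image_of_mem _ hw
  exact ⟨c, hc.symm⟩

theorem subset_slideLeft_of_image_eq {s : Set M}
    (h : (· * Δ) '' s = (Δ * ·) '' s) : s ⊆ slideLeft Δ := by
  intro w hw
  obtain ⟨c, -, hc⟩ : Δ * w ∈ (· * Δ) '' s := h ▸ Set.mem_image_of_mem _ hw
  exact ⟨c, hc.symm⟩

theorem range_mul_right_eq_range_mul_left_iff :
    (Set.range (· * Δ) = Set.range (Δ * ·)) ↔ slideRight Δ = ⊤ ∧ slideLeft Δ = ⊤ := by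
  simp only [← Set.image_univ, Submonoid.eq_top_iff']
  refine ⟨fun h => ⟨fun w => subset_slideRight_of_image_eq h trivial,
    fun w => subset_slideLeft_of_image_eq h trivial⟩, fun ⟨hR, hL⟩ => ?_⟩
  ext z
  constructor
  · rintro ⟨w, -, rfl⟩
    obtain ⟨c, hc⟩ := hR w
    exact ⟨c, trivial, hc.symm⟩
  · rintro ⟨w, -, rfl⟩
    obtain ⟨c, hc⟩ := hL w
    exact ⟨c, trivial, hc.symm⟩

theorem leftDvd_subset_slideRight (h : {x : M | leftDvd x Δ} = {x | rightDvd x Δ}) :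
    {x : M | leftDvd x Δ} ⊆ slideRight Δ := by
  rintro x ⟨y, hxy⟩
  obtain ⟨z, hyz⟩ := (Set.ext_iff.1 h y).2 ⟨x, hxy⟩
  refine ⟨z, ?_⟩
  conv_lhs => rw [← hyz]
  rw [← mul_assoc, hxy]

theorem leftDvd_subset_slideLeft (h : {x : M | leftDvd x Δ} = {x | rightDvd x Δ}) :
    {x : M | leftDvd x Δ} ⊆ slideLeft Δ := by
  intro x hx
  obtain ⟨y, hyx⟩ := (Set.ext_iff.1 h x).1 hx
  obtain ⟨z, hzy⟩ := (Set.ext_iff.1 h y).1 ⟨x, hyx⟩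
  refine ⟨z, ?_⟩
  conv_lhs => rw [← hzy]
  rw [mul_assoc, hyx]

theorem slide_eq_top_of_closure_eq_top {s : Set M} (hs : Submonoid.closure s = ⊤)
    (hR : s ⊆ slideRight Δ) (hL : s ⊆ slideLeft Δ) : slideRight Δ = ⊤ ∧ slideLeft Δ = ⊤ :=
  ⟨top_le_iff.1 (hs ▸ Submonoid.closure_le.2 hR), top_le_iff.1 (hs ▸ Submonoid.closure_le.2 hL)⟩

theorem exists_mulEquiv_mul_eq_mul_apply
    (hlc : ∀ a b c : M, a * b = a * c → b = c) (hrc : ∀ a b c : M, b * a = c * a → b = c)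
    (hR : slideRight Δ = ⊤) (hL : slideLeft Δ = ⊤) :
    ∃ τ : M ≃* M, ∀ w : M, w * Δ = Δ * τ w := by
  choose f hf using fun w => mem_slideRight.1 ((Submonoid.eq_top_iff' _).1 hR w)
  choose g hg using fun w => mem_slideLeft.1 ((Submonoid.eq_top_iff' _).1 hL w)
  refine ⟨⟨⟨f, g, fun w => hrc Δ _ _ ?_, fun w => hlc Δ _ _ ?_⟩, fun v w => hlc Δ _ _ ?_⟩, hf⟩
  · rw [← hg, ← hf]
  · rw [← hf, ← hg]
  · rw [← hf, mul_assoc, hf, ← mul_assoc, hf, mul_assoc]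

theorem leftDvd_iff_rightDvd_of_mul_eq_mul_apply
    (hlc : ∀ a b c : M, a * b = a * c → b = c) (hrc : ∀ a b c : M, b * a = c * a → b = c)
    {τ : M ≃* M} (hτ : ∀ w, w * Δ = Δ * τ w) (x : M) : leftDvd x Δ ↔ rightDvd x Δ := by
  constructor
  · rintro ⟨y, hxy⟩
    refine ⟨τ.symm y, hrc y _ _ ?_⟩
    rw [mul_assoc, hxy, hτ, τ.apply_symm_apply]
  · rintro ⟨c, hcx⟩
    refine ⟨τ c, hlc c _ _ ?_⟩
    rw [← mul_assoc, hcx, hτ]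

theorem image_isAtomElem_mul_eq_of_mul_eq_mul_apply {τ : M ≃* M}
    (hτ : ∀ w, w * Δ = Δ * τ w) :
    (· * Δ) '' {a : M | IsAtomElem a} = (Δ * ·) '' {a : M | IsAtomElem a} := by
  calc (· * Δ) '' {a : M | IsAtomElem a} = (Δ * ·) '' (τ '' {a : M | IsAtomElem a}) := by
        rw [Set.image_image]
        exact Set.image_congr fun w _ => hτ w
    _ = _ := by rw [τ.image_isAtomElem]

end Monoid

theorem garside_element_tfae {M : Type} [Monoid M]
    (hlc : ∀ a b c : M, a * b = a * c → b = c)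
    (hrc : ∀ a b c : M, b * a = c * a → b = c)
    (hat : IsAtomicMonoid M)
    (Δ : M) (hgen : Submonoid.closure {x : M | leftDvd x Δ} = ⊤) :
    List.TFAE [
      {x : M | leftDvd x Δ} = {x : M | rightDvd x Δ},
      (fun a => a * Δ) '' {a : M | IsAtomElem a} = (fun a => Δ * a) '' {a : M | IsAtomElem a},
      (Set.range fun w : M => w * Δ) = (Set.range fun w : M => Δ * w),
      ∃ τ : M ≃* M, ∀ w : M, w * Δ = Δ * τ w ] := by
  tfae_have 1 → 3 := fun h1 => range_mul_right_eq_range_mul_left_iff.2 <|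
    slide_eq_top_of_closure_eq_top hgen (leftDvd_subset_slideRight h1)
      (leftDvd_subset_slideLeft h1)
  tfae_have 2 → 3 := fun h2 => range_mul_right_eq_range_mul_left_iff.2 <|
    slide_eq_top_of_closure_eq_top (closure_isAtomElem_eq_top hat)
      (subset_slideRight_of_image_eq h2) (subset_slideLeft_of_image_eq h2)
  tfae_have 3 → 4 := fun h3 =>
    have ⟨hR, hL⟩ := range_mul_right_eq_range_mul_left_iff.1 h3
    exists_mulEquiv_mul_eq_mul_apply hlc hrc hR hL
  tfae_have 4 → 1 := fun ⟨_, hτ⟩ =>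
    Set.ext (leftDvd_iff_rightDvd_of_mul_eq_mul_apply hlc hrc hτ)
  tfae_have 4 → 2 := fun ⟨_, hτ⟩ => image_isAtomElem_mul_eq_of_mul_eq_mul_apply hτ
  tfae_finish
end

section
/- Let M be a cancellative atomic monoid such that the left divisibility order ≤_L is a partial order in which any two elements with a common upper bound have a least upper bound (and in particular, for a, b ≤_L Δ the join a ∨_L b exists). Let Δ ∈ M satisfy L(Δ) = R(Δ), where L(Δ) = {x ∈ M : x ≤_L Δ} and R(Δ) = {x ∈ M : x ≤_R Δ}. Then L(Δ) is closed under left complement: for all a, b ∈ L(Δ), the unique element a∖b ∈ M satisfying a · (a∖b) = a ∨_L b belongs to L(Δ). -/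
/-- `j` is the least upper bound (join) of `a` and `b` for the left divisibility order. -/
def IsLeftJoin {M : Type*} [Monoid M] (a b j : M) : Prop :=
  leftDvd a j ∧ leftDvd b j ∧ ∀ z, leftDvd a z → leftDvd b z → leftDvd j z

/-! Since `a ∨_L b ≤_L Δ`, write `Δ = a (a∖b) d`. Then `(a∖b) d` right-divides `Δ`, so it
left-divides `Δ` because `Δ` is balanced, and hence so does its left factor `a∖b`. -/

section Divisibility

variable {M : Type*} [Monoid M]

theorem leftDvd_of_mul_leftDvd {a b c : M} (h : leftDvd (a * b) c) : leftDvd a c := by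
  obtain ⟨d, rfl⟩ := h
  exact ⟨b * d, (mul_assoc a b d).symm⟩

theorem rightDvd_of_mul_eq {a b c : M} (h : a * b = c) : rightDvd b c := ⟨a, h⟩

theorem IsLeftJoin.leftDvd {a b j z : M} (hj : IsLeftJoin a b j) (ha : leftDvd a z)
    (hb : leftDvd b z) : leftDvd j z :=
  hj.2.2 z ha hb

def IsBalanced (Δ : M) : Prop := {x : M | leftDvd x Δ} = {x : M | rightDvd x Δ}

theorem IsBalanced.leftDvd_of_rightDvd {Δ x : M} (hΔ : IsBalanced Δ) (hx : rightDvd x Δ) :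
    leftDvd x Δ := by
  have hx' : x ∈ {x : M | rightDvd x Δ} := hx
  rwa [← hΔ] at hx'

theorem IsBalanced.leftDvd_of_mul_leftDvd {Δ a c : M} (hΔ : IsBalanced Δ)
    (h : leftDvd (a * c) Δ) : leftDvd c Δ := by
  obtain ⟨d, hd⟩ := h
  have hcd : rightDvd (c * d) Δ := rightDvd_of_mul_eq (by rw [← mul_assoc, hd])
  exact _root_.leftDvd_of_mul_leftDvd (hΔ.leftDvd_of_rightDvd hcd)

end Divisibility

theorem garside_divisors_closed_under_left_complement_general {M : Type} [Monoid M]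
    (Δ : M) (hLR : {x : M | leftDvd x Δ} = {x : M | rightDvd x Δ}) :
    ∀ a b : M, leftDvd a Δ → leftDvd b Δ →
      ∀ j : M, IsLeftJoin a b j → ∀ c : M, a * c = j → leftDvd c Δ := by
  intro a b ha hb j hj c hc
  have hΔ : IsBalanced Δ := hLR
  exact hΔ.leftDvd_of_mul_leftDvd (hc ▸ hj.leftDvd ha hb)

theorem garside_divisors_closed_under_left_complement {M : Type} [Monoid M]
    (hlc : ∀ a b c : M, a * b = a * c → b = c)
    (hrc : ∀ a b c : M, b * a = c * a → b = c)
    (hat : IsAtomicMonoid M)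
    (hpo : ∀ a b : M, leftDvd a b → leftDvd b a → a = b)
    (hql : ∀ a b : M, (∃ z, leftDvd a z ∧ leftDvd b z) → ∃ j, IsLeftJoin a b j)
    (Δ : M) (hLR : {x : M | leftDvd x Δ} = {x : M | rightDvd x Δ}) :
    ∀ a b : M, leftDvd a Δ → leftDvd b Δ →
      ∀ j : M, IsLeftJoin a b j → ∀ c : M, a * c = j → leftDvd c Δ :=
  garside_divisors_closed_under_left_complement_general Δ hLR
end

section
/- Let n ≥ 2, let H be a group with presentation ⟨ S ∣ 𝓡 ⟩ (i.e., H is the quotient of the free group on S by the normal closure of the set of relators 𝓡), let h ∈ H be non-trivial, and let D be a word in the free group on S representing h. Let ρ : Bₙ → Aut(G) be the Artin type representation associated to (H,h), where G = H₁ ∗ ⋯ ∗ Hₙ. Then the semidirect product G ⋊_ρ Bₙ is isomorphic to the group presented by generators S ∪ {σ₁, …, σ_{n−1}} and relations: r = 1 for each r ∈ 𝓡; σᵢσᵢ₊₁σᵢ = σᵢ₊₁σᵢσᵢ₊₁ for i = 1, …, n−2; σᵢσⱼ = σⱼσᵢ for |i−j| ≥ 2; σᵢ x = x σᵢ for all x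 ∈ S and i = 2, …, n−1; and x σ₁ D σ₁ = σ₁ D σ₁ D⁻¹ x D for all x ∈ S. -/
/-- Relators for the presentation of `G ⋊_ρ Bₙ` given in Proposition 4 (Section 6):
generators `S ⊔ {σ₁, …, σ_{n-1}}`, relators of `H`, braid relators, commutation of the
`σᵢ` (`i ≥ 2`) with `S`, and `x σ₁ D σ₁ = σ₁ D σ₁ D⁻¹ x D` for `x ∈ S`. -/
def semidirectRels (n : ℕ) (S : Type) (R : Set (FreeGroup S)) (D : FreeGroup S) :
    Set (FreeGroup (S ⊕ Fin (n - 1))) :=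
  (FreeGroup.map Sum.inl) '' R ∪
  (FreeGroup.map Sum.inr) '' braidRels (n - 1) ∪
  { w | ∃ (x : S) (i : Fin (n - 1)), 1 ≤ (i : ℕ) ∧
      w = FreeGroup.of (Sum.inr i) * FreeGroup.of (Sum.inl x) *
          (FreeGroup.of (Sum.inl x) * FreeGroup.of (Sum.inr i))⁻¹ } ∪
  { w | ∃ (x : S) (i : Fin (n - 1)), (i : ℕ) = 0 ∧
      w = FreeGroup.of (Sum.inl x) * FreeGroup.of (Sum.inr i) * (FreeGroup.map Sum.inl) D *
            FreeGroup.of (Sum.inr i) *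
          (FreeGroup.of (Sum.inr i) * (FreeGroup.map Sum.inl) D * FreeGroup.of (Sum.inr i) *
            ((FreeGroup.map Sum.inl) D)⁻¹ * FreeGroup.of (Sum.inl x) *
            (FreeGroup.map Sum.inl) D)⁻¹ }

/-!
The map `P → G ⋊ Bₙ` from the presented group sends `x ∈ S` to `φ₁(x)` and `σᵢ` to `σᵢ`; the
relators hold in `G ⋊ Bₙ` by the defining formulas of `ρ`.

For the inverse, note that in `G ⋊ Bₙ` the rule `ρ(σⱼ)(φⱼ(y)) = hⱼ⁻¹ φⱼ₊₁(y) hⱼ` reads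
`φⱼ₊₁(y) = (hⱼ σⱼ) φⱼ(y) (hⱼ σⱼ)⁻¹`, so inside `P` we define the copies of `H` recursively by
this formula. Induction along the strands, driven by the braid relations, then shows that `σᵢ`
centralises the `j`-th copy unless `i ∈ {j - 1, j}`, and that the `j`-th copy centralises
`σⱼ hⱼ σⱼ hⱼ⁻¹`; for the first strand these are the relations `σᵢ x = x σᵢ` and
`x σ₁ D σ₁ = σ₁ D σ₁ D⁻¹ x D`. They are exactly what makes conjugation by `σₖ` act on the copies
as `ρ(σₖ)`, so the copies and the `σᵢ` assemble into `G ⋊ Bₙ → P`. Both composites fix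
generators.
-/

section BraidIdentities

variable {G : Type*} [Group G] {s t d a : G}

theorem conj_eq_of_braid (htd : Commute t d) (hst : s * t * s = t * s * t) :
    (d * s)⁻¹ * t * (d * s) = t * s * t⁻¹ :=
  calc (d * s)⁻¹ * t * (d * s) = s⁻¹ * d⁻¹ * (t * d) * s := by group
    _ = s⁻¹ * (t * s * t) * t⁻¹ := by rw [htd.eq]; group
    _ = t * s * t⁻¹ := by rw [← hst]; group

theorem twist_conj_eq_of_braid (htd : Commute t d) (hst : s * t * s = t * s * t)
    (ha : a = d * s * d * (d * s)⁻¹) :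
    t * a * t * a⁻¹ = (d * s) * (t * (s * d * s * d⁻¹) * t⁻¹) * (d * s)⁻¹ := by
  subst ha
  calc _ = (d * s) * (((d * s)⁻¹ * t * (d * s)) * d * ((d * s)⁻¹ * t * (d * s)) * d⁻¹) *
        (d * s)⁻¹ := by group
    _ = (d * s) * (t * s * (t⁻¹ * (d * t)) * s * (t⁻¹ * d⁻¹)) * (d * s)⁻¹ := by
      rw [conj_eq_of_braid htd hst]; group
    _ = _ := by rw [← htd.eq, inv_mul_cancel_left, htd.inv_inv.eq]; group

theorem eq_conj_of_braid (htd : Commute t d) (hst : s * t * s = t * s * t)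
    (hds : Commute d (s * d * s * d⁻¹)) (ha : a = d * s * d * (d * s)⁻¹) :
    s = (a * t * (d * s)) * t * (a * t * (d * s))⁻¹ := by
  subst ha
  have hsd : d * s * d * s = s * d * s * d :=
    calc d * s * d * s = d * (s * d * s * d⁻¹) * d := by group
      _ = s * d * s * d := by rw [hds.eq]; group
  symm
  calc _ = (d * s) * d * ((d * s)⁻¹ * t * (d * s)) * t * ((d * s)⁻¹ * t * (d * s))⁻¹ * d⁻¹ *
        (d * s)⁻¹ := by group
    _ = (d * s) * d * (t * s * t) * s⁻¹ * t⁻¹ * d⁻¹ * (d * s)⁻¹ := by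
      rw [conj_eq_of_braid htd hst]; group
    _ = (d * s * d * s) * d⁻¹ * s⁻¹ * d⁻¹ := by rw [← hst]; group
    _ = s := by rw [hsd]; group

theorem conj_eq_of_commute_twist {e : G} (h : Commute (d * e * d⁻¹) (s * d * s * d⁻¹)) :
    d * e * d⁻¹ = s * ((d * s) * e * (d * s)⁻¹) * s⁻¹ :=
  calc d * e * d⁻¹ = (s * d * s * d⁻¹) * (d * e * d⁻¹) * (s * d * s * d⁻¹)⁻¹ :=
        h.symm.mul_inv_cancel.symm
    _ = _ := by group

end BraidIdentities

theorem FreeGroup.lift_map_eq_of_forall {α β G : Type*} [Group G] {f : β → G} {g : α → β}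
    (F : FreeGroup α →* G) (hF : ∀ x, F (.of x) = f (g x)) (w : FreeGroup α) :
    FreeGroup.lift f (FreeGroup.map g w) = F w :=
  DFunLike.congr_fun
    (FreeGroup.ext_hom (f := (FreeGroup.lift f).comp (FreeGroup.map g)) (g := F) fun x => by
      simp [hF]) w

theorem PresentedGroup.mk_of {α : Type*} {rels : Set (FreeGroup α)} (x : α) :
    mk rels (FreeGroup.of x) = of x := rfl

theorem PresentedGroup.commute_of_commute_of {α G : Type*} [Group G] {rels : Set (FreeGroup α)}
    (F : PresentedGroup rels →* G) {a : G} (h : ∀ x, Commute (F (.of x)) a)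
    (y : PresentedGroup rels) : Commute (F y) a := by
  induction y using PresentedGroup.induction_on with | H z => ?_
  induction z using FreeGroup.induction_on with
  | C1 => simp
  | of x => exact h x
  | inv_of x hx => simpa using hx.inv_left
  | mul z w hz hw => simpa using hz.mul_left hw

theorem SemidirectProduct.lift_compat_of_closure_eq_top {N G H : Type*} [Group N] [Group G]
    [Group H] {φ : G →* MulAut N} (f₁ : N →* H) (f₂ : G →* H) {s : Set G}
    (hs : Subgroup.closure s = ⊤)
    (hf : ∀ g ∈ s, f₁.comp (φ g).toMonoidHom = (MulAut.conj (f₂ g)).toMonoidHom.comp f₁)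
    (g : G) : f₁.comp (φ g).toMonoidHom = (MulAut.conj (f₂ g)).toMonoidHom.comp f₁ := by
  simp only [MonoidHom.ext_iff, MonoidHom.comp_apply, MulEquiv.coe_toMonoidHom,
    MulAut.conj_apply] at hf ⊢
  induction (hs ▸ Subgroup.mem_top g : g ∈ Subgroup.closure s) using
    Subgroup.closure_induction with
  | mem g hg => exact hf g hg
  | one => simp
  | mul g g' _ _ ihg ihg' => intro x; simp only [map_mul, MulAut.mul_apply, ihg, ihg']; group
  | inv g _ ihg =>
    intro x
    have := ihg ((φ g)⁻¹ x)
    rw [MulAut.apply_inv_self] at this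
    rw [map_inv, map_inv, this]
    group

namespace IsArtinRep

open Monoid SemidirectProduct

variable {n : ℕ} {H : Type} [Group H] {h : H}
  {ρ : BraidGroup (n - 1) →* MulAut (CoprodI fun _ : Fin n => H)}

theorem inl_of_idx1 (hρ : IsArtinRep h ρ) (k : Fin (n - 1)) (y : H) :
    (inl (CoprodI.of (i := idx1 k) y) : _ ⋊[ρ] _) =
      (inl (CoprodI.of (i := idx0 k) h) * inr (braidGen k)) * inl (CoprodI.of (i := idx0 k) y) *
        (inl (CoprodI.of (i := idx0 k) h) * inr (braidGen k))⁻¹ := by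
  calc (inl (CoprodI.of (i := idx1 k) y) : _ ⋊[ρ] _)
      = inl (CoprodI.of (i := idx0 k) h * ρ (braidGen k) (CoprodI.of y) *
          (CoprodI.of (i := idx0 k) h)⁻¹) := by rw [(hρ k).1]; group
    _ = _ := by simp only [map_mul, map_inv, inl_aut]; group

theorem inr_commute_inl_of_ne (hρ : IsArtinRep h ρ) (k : Fin (n - 1)) {j : Fin n}
    (h0 : j ≠ idx0 k) (h1 : j ≠ idx1 k) (y : H) :
    Commute (inr (braidGen k) : _ ⋊[ρ] _) (inl (CoprodI.of (i := j) y)) := by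
  have := inl_aut (φ := ρ) (braidGen k) (CoprodI.of (i := j) y)
  rw [(hρ k).2.2 j h0 h1 y, map_inv, eq_mul_inv_iff_mul_eq] at this
  exact this.symm

theorem artin_relation (hρ : IsArtinRep h ρ) (k : Fin (n - 1)) (y : H) :
    let X : _ ⋊[ρ] _ := inl (CoprodI.of (i := idx0 k) y)
    let A : _ ⋊[ρ] _ := inl (CoprodI.of (i := idx0 k) h)
    let σ : _ ⋊[ρ] _ := inr (braidGen k)
    X * σ * A * σ = σ * A * σ * A⁻¹ * X * A := by
  intro X A σ
  ext
  · simp only [X, A, σ, mul_left, mul_right, inv_left, inv_right, left_inl, right_inl, left_inr,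
      right_inr, map_one, map_mul, map_inv, one_mul, mul_one, inv_one, MulAut.one_apply,
      MulAut.mul_apply, (hρ k).1, (hρ k).2.1]
    group
  · simp [X, A, σ, mul_right]

end IsArtinRep

namespace ArtinSemidirect

variable {n : ℕ} {S : Type} {R : Set (FreeGroup S)} {D : FreeGroup S}

local notation "P" => PresentedGroup (semidirectRels n S R D)

/-- `σⱼ₊₁` in the paper's numbering; the junk value `1` beyond the last generator makes several
commutation lemmas below hold without a range hypothesis. -/
def sigma (j : ℕ) : P := if hj : j < n - 1 then .of (Sum.inr ⟨j, hj⟩) else 1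

theorem sigma_of_lt {j : ℕ} (hj : j < n - 1) : (sigma j : P) = .of (Sum.inr ⟨j, hj⟩) :=
  dif_pos hj

theorem sigma_of_le {j : ℕ} (hj : n - 1 ≤ j) : (sigma j : P) = 1 :=
  dif_neg (by omega)

theorem sigma_braid {j : ℕ} (hj : j + 1 < n - 1) :
    (sigma j : P) * sigma (j + 1) * sigma j = sigma (j + 1) * sigma j * sigma (j + 1) := by
  have hw := PresentedGroup.one_of_mem (rels := semidirectRels n S R D)
    (Or.inl (Or.inl (Or.inr ⟨_, Or.inl ⟨⟨j, by omega⟩, ⟨j + 1, hj⟩, rfl, rfl⟩, rfl⟩)))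
  simp only [map_mul, map_inv, FreeGroup.map.of, PresentedGroup.mk_of, mul_inv_eq_one] at hw
  rwa [sigma_of_lt hj, sigma_of_lt (by omega)]

theorem sigma_commute_of_add_two_le {i j : ℕ} (hij : i + 2 ≤ j) :
    Commute (sigma i : P) (sigma j) := by
  by_cases hj : j < n - 1
  · have hw := PresentedGroup.one_of_mem (rels := semidirectRels n S R D)
      (Or.inl (Or.inl (Or.inr ⟨_, Or.inr ⟨⟨i, by omega⟩, ⟨j, hj⟩, hij, rfl⟩, rfl⟩)))
    simp only [map_mul, map_inv, FreeGroup.map.of, PresentedGroup.mk_of, mul_inv_eq_one] at hw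
    rwa [sigma_of_lt hj, sigma_of_lt (by omega)]
  · rw [sigma_of_le (j := j) (by omega)]
    exact Commute.one_right _

def strandZero : PresentedGroup R →* P :=
  PresentedGroup.map (FreeGroup.map Sum.inl) fun r hr => Or.inl (Or.inl (Or.inl ⟨r, hr, rfl⟩))

theorem strandZero_of (x : S) : (strandZero (.of x) : P) = .of (Sum.inl x) := rfl

theorem strandZero_mk (w : FreeGroup S) :
    (strandZero (PresentedGroup.mk R w) : P) = .mk _ (FreeGroup.map Sum.inl w) := rfl

theorem strandZero_commute_sigma {i : ℕ} (hi : 1 ≤ i) (y : PresentedGroup R) :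
    Commute (strandZero y : P) (sigma i) := by
  by_cases hin : i < n - 1
  · refine PresentedGroup.commute_of_commute_of _ (fun x => ?_) y
    have hw := PresentedGroup.mk_eq_mk_of_mul_inv_mem (rels := semidirectRels n S R D)
      (Or.inl (Or.inr ⟨x, ⟨i, hin⟩, hi, rfl⟩))
    simp only [map_mul, PresentedGroup.mk_of] at hw
    rw [strandZero_of, sigma_of_lt hin]
    exact hw.symm
  · rw [sigma_of_le (by omega)]
    exact Commute.one_right _

/-- This is the relation `x σ₁ D σ₁ = σ₁ D σ₁ D⁻¹ x D`. -/
theorem strandZero_commute_twist (hn : 0 < n - 1) (y : PresentedGroup R) :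
    Commute (strandZero y : P)
      (sigma 0 * strandZero (.mk R D) * sigma 0 * (strandZero (.mk R D))⁻¹) := by
  refine PresentedGroup.commute_of_commute_of _ (fun x => ?_) y
  have hw := PresentedGroup.mk_eq_mk_of_mul_inv_mem (rels := semidirectRels n S R D)
    (Or.inr ⟨x, ⟨0, hn⟩, rfl, rfl⟩)
  simp only [map_mul, map_inv, PresentedGroup.mk_of, ← strandZero_mk] at hw
  rw [strandZero_of, sigma_of_lt hn]
  calc _ = (.of (Sum.inl x) * .of (Sum.inr ⟨0, hn⟩) * strandZero (.mk R D) *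
        .of (Sum.inr ⟨0, hn⟩)) * (strandZero (.mk R D))⁻¹ := by group
    _ = _ := by rw [hw]; group

/-- `φⱼ₊₁` in the paper's numbering. -/
def strand : ℕ → (PresentedGroup R →* P)
  | 0 => strandZero
  | j + 1 => (MulAut.conj (strand j (.mk R D) * sigma j)).toMonoidHom.comp (strand j)

theorem strand_succ_apply (j : ℕ) (y : PresentedGroup R) :
    (strand (j + 1) y : P) =
      (strand j (.mk R D) * sigma j) * strand j y * (strand j (.mk R D) * sigma j)⁻¹ := rfl

theorem commute_strand_succ {x : P} {j : ℕ} (hx : ∀ z, Commute x (strand j z))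
    (hxs : Commute x (sigma j)) (y : PresentedGroup R) : Commute x (strand (j + 1) y) := by
  rw [strand_succ_apply]
  have hc := (hx (.mk R D)).mul_right hxs
  exact (hc.mul_right (hx y)).mul_right hc.inv_right

theorem sigma_commute_strand_of_lt {i j : ℕ} (hji : j < i) (y : PresentedGroup R) :
    Commute (sigma i : P) (strand j y) := by
  induction j generalizing y with
  | zero => exact (strandZero_commute_sigma (by omega) y).symm
  | succ j ih =>
    exact commute_strand_succ (ih (by omega)) (sigma_commute_of_add_two_le (by omega)).symm y

theorem strand_commute_twist {j : ℕ} (hj : j < n - 1) (y : PresentedGroup R) :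
    Commute (strand j y : P)
      (sigma j * strand j (.mk R D) * sigma j * (strand j (.mk R D))⁻¹) := by
  induction j generalizing y with
  | zero => exact strandZero_commute_twist hj y
  | succ j ih =>
    have htd := sigma_commute_strand_of_lt (n := n) (D := D) (lt_add_one j) (.mk R D)
    rw [twist_conj_eq_of_braid htd (sigma_braid hj) (strand_succ_apply j _),
      strand_succ_apply j y, Commute.conj_iff]
    have hyt : Commute (strand j y : P) (sigma (j + 1)) :=
      (sigma_commute_strand_of_lt (lt_add_one j) y).symm
    exact (hyt.mul_right (ih (by omega) y)).mul_right hyt.inv_right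

theorem sigma_commute_strand_of_add_two_le {i j : ℕ} (hij : i + 2 ≤ j) (hj : j < n)
    (y : PresentedGroup R) : Commute (sigma i : P) (strand j y) := by
  induction j, hij using Nat.le_induction generalizing y with
  | base =>
    set d : P := strand i (.mk R D)
    set g : P := strand (i + 1) (.mk R D) * sigma (i + 1) * (d * sigma i)
    have htd : Commute (sigma (i + 1) : P) d := sigma_commute_strand_of_lt (lt_add_one i) _
    have hds : Commute d (sigma i * d * sigma i * d⁻¹) := strand_commute_twist (by omega) _
    have hy : (strand (i + 2) y : P) = g * strand i y * g⁻¹ := by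
      rw [strand_succ_apply (i + 1), strand_succ_apply i y]; simp only [g, d]; group
    -- conjugation by `g` carries the `i`-th copy to the `(i+2)`-nd and `σᵢ₊₁` to `σᵢ`
    have key : Commute (g * sigma (i + 1) * g⁻¹) (g * strand i y * g⁻¹) :=
      (Commute.conj_iff g).mpr (sigma_commute_strand_of_lt (lt_add_one i) y)
    rwa [← eq_conj_of_braid htd (sigma_braid (by omega)) hds (strand_succ_apply i _), ← hy]
      at key
  | succ j hij ih =>
    exact commute_strand_succ (ih (by omega)) (sigma_commute_of_add_two_le hij) y

theorem sigma_commute_strand {i j : ℕ} (hj : j < n) (h0 : i ≠ j) (h1 : i + 1 ≠ j)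
    (y : PresentedGroup R) : Commute (sigma i : P) (strand j y) := by
  rcases Nat.lt_or_gt_of_ne h0 with hij | hij
  · exact sigma_commute_strand_of_add_two_le (by omega) hj y
  · exact sigma_commute_strand_of_lt hij y

open Monoid SemidirectProduct

variable {ρ : BraidGroup (n - 1) →* MulAut (CoprodI fun _ : Fin n => PresentedGroup R)}

def strandsHom : CoprodI (fun _ : Fin n => PresentedGroup R) →* P :=
  CoprodI.lift fun j => strand j

theorem strandsHom_of (j : Fin n) (y : PresentedGroup R) :
    (strandsHom (CoprodI.of (i := j) y) : P) = strand j y :=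
  CoprodI.lift_of _ _

def braidHom : BraidGroup (n - 1) →* P :=
  PresentedGroup.map (FreeGroup.map Sum.inr) fun r hr => Or.inl (Or.inl (Or.inr ⟨r, hr, rfl⟩))

theorem braidHom_braidGen (k : Fin (n - 1)) : (braidHom (braidGen k) : P) = sigma k := by
  rw [sigma_of_lt k.2]; rfl

theorem strandsHom_comp_artinRep (hρ : IsArtinRep (PresentedGroup.mk R D) ρ)
    (k : Fin (n - 1)) :
    (strandsHom (D := D)).comp (ρ (braidGen k)).toMonoidHom =
      (MulAut.conj (braidHom (braidGen k))).toMonoidHom.comp strandsHom := by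
  refine CoprodI.ext_hom _ _ fun j => MonoidHom.ext fun y => ?_
  simp only [MonoidHom.comp_apply, MulEquiv.coe_toMonoidHom, MulAut.conj_apply,
    braidHom_braidGen]
  have hv0 : ((idx0 k : Fin n) : ℕ) = k := rfl
  have hv1 : ((idx1 k : Fin n) : ℕ) = k + 1 := rfl
  by_cases h0 : j = idx0 k
  · subst h0
    rw [(hρ k).1 y]
    simp only [map_mul, map_inv, strandsHom_of, hv0, hv1, strand_succ_apply]
    group
  by_cases h1 : j = idx1 k
  · subst h1
    rw [(hρ k).2.1 y]
    simp only [map_mul, map_inv, strandsHom_of, hv0, hv1, strand_succ_apply]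
    refine conj_eq_of_commute_twist ?_
    have := strand_commute_twist (n := n) (D := D) k.2 (.mk R D * y * (.mk R D)⁻¹)
    rwa [map_mul, map_mul, map_inv] at this
  rw [(hρ k).2.2 j h0 h1 y, strandsHom_of]
  exact (sigma_commute_strand (i := k) j.2 (fun h => h0 (Fin.ext h.symm))
    (fun h => h1 (Fin.ext h.symm)) y).mul_inv_cancel.symm

def fromSemidirect (hρ : IsArtinRep (PresentedGroup.mk R D) ρ) :
    CoprodI (fun _ : Fin n => PresentedGroup R) ⋊[ρ] BraidGroup (n - 1) →* P :=
  SemidirectProduct.lift strandsHom braidHom <|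
    SemidirectProduct.lift_compat_of_closure_eq_top _ _ (PresentedGroup.closure_range_of _) <| by
      rintro _ ⟨k, rfl⟩
      exact strandsHom_comp_artinRep hρ k

def semidirectGen (hn : 0 < n) (v : S ⊕ Fin (n - 1)) :
    CoprodI (fun _ : Fin n => PresentedGroup R) ⋊[ρ] BraidGroup (n - 1) :=
  Sum.elim (fun x => inl (CoprodI.of (i := ⟨0, hn⟩) (.of x))) (fun k => inr (braidGen k)) v

theorem lift_semidirectGen_map_inl (hn : 0 < n) (w : FreeGroup S) :
    FreeGroup.lift (semidirectGen (ρ := ρ) hn) (FreeGroup.map Sum.inl w) =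
      inl (CoprodI.of (i := ⟨0, hn⟩) (PresentedGroup.mk R w)) :=
  FreeGroup.lift_map_eq_of_forall (f := semidirectGen hn) (g := Sum.inl)
    ((inl.comp (CoprodI.of (M := fun _ : Fin n => PresentedGroup R) (i := ⟨0, hn⟩))).comp
      (PresentedGroup.mk R)) (fun _ => rfl) w

theorem lift_semidirectGen_map_inr (hn : 0 < n) (w : FreeGroup (Fin (n - 1))) :
    FreeGroup.lift (semidirectGen (ρ := ρ) hn) (FreeGroup.map Sum.inr w) =
      inr (PresentedGroup.mk _ w) :=
  FreeGroup.lift_map_eq_of_forall (f := semidirectGen hn) (g := Sum.inr)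
    (inr.comp (PresentedGroup.mk _)) (fun _ => rfl) w

def toSemidirect (hn : 0 < n) (hρ : IsArtinRep (PresentedGroup.mk R D) ρ) :
    P →* CoprodI (fun _ : Fin n => PresentedGroup R) ⋊[ρ] BraidGroup (n - 1) :=
  PresentedGroup.toGroup (f := semidirectGen hn) <| by
    rintro _ (((⟨r, hr, rfl⟩ | ⟨r, hr, rfl⟩) | ⟨x, i, hi, rfl⟩) | ⟨x, i, hi, rfl⟩)
    · rw [lift_semidirectGen_map_inl, PresentedGroup.one_of_mem hr, map_one, map_one]
    · rw [lift_semidirectGen_map_inr, PresentedGroup.one_of_mem hr, map_one]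
    · simp only [map_mul, map_inv, FreeGroup.lift_apply_of, mul_inv_eq_one]
      exact (IsArtinRep.inr_commute_inl_of_ne hρ i
        (Fin.ne_of_val_ne (show 0 ≠ (i : ℕ) by omega))
        (Fin.ne_of_val_ne (show 0 ≠ (i : ℕ) + 1 by omega)) _).eq
    · simp only [map_mul, map_inv, FreeGroup.lift_apply_of, lift_semidirectGen_map_inl,
        mul_inv_eq_one, semidirectGen, Sum.elim_inl, Sum.elim_inr]
      rw [show (⟨0, hn⟩ : Fin n) = idx0 i from Fin.ext hi.symm]
      exact IsArtinRep.artin_relation hρ i (.of x)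

theorem toSemidirect_of (hn : 0 < n) (hρ : IsArtinRep (PresentedGroup.mk R D) ρ)
    (v : S ⊕ Fin (n - 1)) : toSemidirect hn hρ (.of v) = semidirectGen hn v :=
  PresentedGroup.toGroup.of _

theorem toSemidirect_strand (hn : 0 < n) (hρ : IsArtinRep (PresentedGroup.mk R D) ρ) {j : ℕ}
    (hj : j < n) (y : PresentedGroup R) :
    toSemidirect hn hρ (strand j y) = inl (CoprodI.of (i := ⟨j, hj⟩) y) := by
  induction j generalizing y with
  | zero =>
    refine DFunLike.congr_fun (PresentedGroup.ext (φ := (toSemidirect hn hρ).comp strandZero)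
      (ψ := inl.comp (CoprodI.of (M := fun _ : Fin n => PresentedGroup R) (i := ⟨0, hj⟩)))
      fun x => ?_) y
    exact toSemidirect_of hn hρ (.inl x)
  | succ j ih =>
    have hj' : j < n - 1 := by omega
    rw [strand_succ_apply, map_mul, map_mul, map_inv, map_mul, ih, ih, sigma_of_lt hj',
      toSemidirect_of]
    exact (IsArtinRep.inl_of_idx1 hρ ⟨j, hj'⟩ y).symm

theorem toSemidirect_comp_fromSemidirect (hn : 0 < n)
    (hρ : IsArtinRep (PresentedGroup.mk R D) ρ) :
    (toSemidirect hn hρ).comp (fromSemidirect hρ) = MonoidHom.id _ := by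
  refine SemidirectProduct.hom_ext (CoprodI.ext_hom _ _ fun j => MonoidHom.ext fun y => ?_)
    (PresentedGroup.ext fun k => ?_)
  · simp only [MonoidHom.comp_apply, fromSemidirect, lift_inl, strandsHom_of,
      toSemidirect_strand hn hρ j.2, MonoidHom.id_apply]
  · simp only [MonoidHom.comp_apply, fromSemidirect, lift_inr, MonoidHom.id_apply]
    exact toSemidirect_of hn hρ (.inr k)

theorem fromSemidirect_comp_toSemidirect (hn : 0 < n)
    (hρ : IsArtinRep (PresentedGroup.mk R D) ρ) :
    (fromSemidirect hρ).comp (toSemidirect hn hρ) = MonoidHom.id P := by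
  refine PresentedGroup.ext fun v => ?_
  rcases v with x | k <;>
    simp only [MonoidHom.comp_apply, toSemidirect_of, semidirectGen, Sum.elim_inl, Sum.elim_inr,
      fromSemidirect, lift_inl, lift_inr, strandsHom_of, MonoidHom.id_apply] <;> rfl

end ArtinSemidirect

theorem semidirect_product_presentation_general (n : ℕ) (hn : 2 ≤ n)
    (S : Type) (R : Set (FreeGroup S))
    (h : PresentedGroup R)
    (D : FreeGroup S) (hD : PresentedGroup.mk R D = h)
    (ρ : BraidGroup (n - 1) →* MulAut (Monoid.CoprodI (fun _ : Fin n => PresentedGroup R)))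
    (hρ : IsArtinRep h ρ) :
    Nonempty ((Monoid.CoprodI (fun _ : Fin n => PresentedGroup R) ⋊[ρ] BraidGroup (n - 1)) ≃*
      PresentedGroup (semidirectRels n S R D)) := by
  subst hD
  have hn₀ : 0 < n := by omega
  exact ⟨MonoidHom.toMulEquiv _ _ (ArtinSemidirect.toSemidirect_comp_fromSemidirect hn₀ hρ)
    (ArtinSemidirect.fromSemidirect_comp_toSemidirect hn₀ hρ)⟩

theorem semidirect_product_presentation (n : ℕ) (hn : 2 ≤ n)
    (S : Type) (R : Set (FreeGroup S))
    (h : PresentedGroup R) (hh : h ≠ 1)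
    (D : FreeGroup S) (hD : PresentedGroup.mk R D = h)
    (ρ : BraidGroup (n - 1) →* MulAut (Monoid.CoprodI (fun _ : Fin n => PresentedGroup R)))
    (hρ : IsArtinRep h ρ) :
    Nonempty ((Monoid.CoprodI (fun _ : Fin n => PresentedGroup R) ⋊[ρ] BraidGroup (n - 1)) ≃*
      PresentedGroup (semidirectRels n S R D)) :=
  semidirect_product_presentation_general n hn S R h D hD ρ hρ
end

section
/- Let n ≥ 2. The Wada representations ρ^{(2)} : Bₙ → Aut(Fₙ) and ρ^{(3)} : Bₙ → Aut(Fₙ) are equivalent: there exist automorphisms φ : Fₙ → Fₙ and μ : Bₙ → Bₙ such that ρ^{(2)}(μ(β)) = φ⁻¹ ∘ ρ^{(3)}(β) ∘ φ for all β ∈ Bₙ. Indeed, one may take φ determined by φ(xᵢ) = y_{n−i+1} where yᵢ = x₁² x₂² ⋯ x_{i−1}² xᵢ, and μ determined by μ(σᵢ) = σ_{n−i}. -/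
/-- Wada's representation of type (1) with parameter `h`:
`σ_k ↦ (x_k ↦ x_k^{-h} x_{k+1} x_k^h, x_{k+1} ↦ x_k)`. -/
def IsWada1 {n : ℕ} (h : ℤ) (ρ : BraidGroup (n - 1) →* MulAut (FreeGroup (Fin n))) : Prop :=
  ∀ k : Fin (n - 1),
    ρ (braidGen k) (FreeGroup.of (idx0 k)) =
      (FreeGroup.of (idx0 k)) ^ (-h) * FreeGroup.of (idx1 k) * (FreeGroup.of (idx0 k)) ^ h ∧
    ρ (braidGen k) (FreeGroup.of (idx1 k)) = FreeGroup.of (idx0 k) ∧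
    ∀ j : Fin n, j ≠ idx0 k → j ≠ idx1 k → ρ (braidGen k) (FreeGroup.of j) = FreeGroup.of j

/-- Wada's representation of type (2):
`σ_k ↦ (x_k ↦ x_k x_{k+1}⁻¹ x_k, x_{k+1} ↦ x_k)`. -/
def IsWada2 {n : ℕ} (ρ : BraidGroup (n - 1) →* MulAut (FreeGroup (Fin n))) : Prop :=
  ∀ k : Fin (n - 1),
    ρ (braidGen k) (FreeGroup.of (idx0 k)) =
      FreeGroup.of (idx0 k) * (FreeGroup.of (idx1 k))⁻¹ * FreeGroup.of (idx0 k) ∧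
    ρ (braidGen k) (FreeGroup.of (idx1 k)) = FreeGroup.of (idx0 k) ∧
    ∀ j : Fin n, j ≠ idx0 k → j ≠ idx1 k → ρ (braidGen k) (FreeGroup.of j) = FreeGroup.of j

/-- Wada's representation of type (3):
`σ_k ↦ (x_k ↦ x_k² x_{k+1}, x_{k+1} ↦ x_{k+1}⁻¹ x_k⁻¹ x_{k+1})`. -/
def IsWada3 {n : ℕ} (ρ : BraidGroup (n - 1) →* MulAut (FreeGroup (Fin n))) : Prop :=
  ∀ k : Fin (n - 1),
    ρ (braidGen k) (FreeGroup.of (idx0 k)) =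
      FreeGroup.of (idx0 k) ^ 2 * FreeGroup.of (idx1 k) ∧
    ρ (braidGen k) (FreeGroup.of (idx1 k)) =
      (FreeGroup.of (idx1 k))⁻¹ * (FreeGroup.of (idx0 k))⁻¹ * FreeGroup.of (idx1 k) ∧
    ∀ j : Fin n, j ≠ idx0 k → j ≠ idx1 k → ρ (braidGen k) (FreeGroup.of j) = FreeGroup.of j

/-- Two representations `ρ, ρ' : B → Aut G` are equivalent if there are automorphisms
`φ : G → G` and `μ : B → B` with `ρ'(μ(β)) = φ⁻¹ ∘ ρ(β) ∘ φ` for all `β`. -/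
def EquivReps {B G : Type*} [Group B] [Group G] (ρ ρ' : B →* MulAut G) : Prop :=
  ∃ (φ : G ≃* G) (μ : B ≃* B), ∀ (β : B) (g : G), ρ' (μ β) g = φ.symm (ρ β (φ g))

/-- `yⱼ = x₁² x₂² ⋯ x_{j-1}² x_j` (0-indexed: `y j = x_0² ⋯ x_{j-1}² x_j`). -/
def wadaY {n : ℕ} (j : Fin n) : FreeGroup (Fin n) :=
  ((((List.finRange n).take (j : ℕ)).map (fun t => (FreeGroup.of t) ^ 2)).prod) * FreeGroup.of j

/-!
Write `Pᵢ = x₀² ⋯ x_{i-1}²`, so that `yᵢ = Pᵢ xᵢ`. Since `P_{i+1} = yᵢ Pᵢ⁻¹ yᵢ`, every `Pᵢ`, and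
hence every `xᵢ = Pᵢ⁻¹ yᵢ`, is a word in the `y`s, so `xᵢ ↦ yᵢ` is an automorphism.

The type (3) automorphism for `σₖ` fixes `Pᵢ` for `i ≠ k + 1`: for `i ≥ k + 2` this is the identity
`(xₖ² x_{k+1})² (x_{k+1}⁻¹ xₖ⁻¹ x_{k+1})² = xₖ² x_{k+1}²`. Hence it sends `yₖ ↦ y_{k+1}` and
`y_{k+1} ↦ y_{k+1} yₖ⁻¹ y_{k+1}` and fixes the other `y`s, which is the type (2) automorphism for
`σₖ` read in the basis of `y`s with the strands in reverse order.
-/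

theorem braidGen_braid {m : ℕ} {i j : Fin m} (h : (i : ℕ) + 1 = j) :
    braidGen i * braidGen j * braidGen i = braidGen j * braidGen i * braidGen j := by
  have hrel :=
    PresentedGroup.mk_eq_mk_of_mul_inv_mem (rels := braidRels m) (Or.inl ⟨i, j, h, rfl⟩)
  simp only [map_mul] at hrel
  exact hrel

theorem braidGen_comm {m : ℕ} {i j : Fin m} (h : (i : ℕ) + 2 ≤ j) :
    braidGen i * braidGen j = braidGen j * braidGen i := by
  have hrel :=
    PresentedGroup.mk_eq_mk_of_mul_inv_mem (rels := braidRels m) (Or.inr ⟨i, j, h, rfl⟩)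
  simp only [map_mul] at hrel
  exact hrel

theorem lift_braidGen_rev_eq_one {m : ℕ} :
    ∀ r ∈ braidRels m, FreeGroup.lift (fun i : Fin m => braidGen i.rev) r = 1 := by
  rintro r (⟨i, j, hij, rfl⟩ | ⟨i, j, hij, rfl⟩) <;>
    simp only [map_mul, map_inv, FreeGroup.lift_apply_of, mul_inv_eq_one]
  · exact (braidGen_braid (by simp only [Fin.val_rev]; omega)).symm
  · exact (braidGen_comm (by simp only [Fin.val_rev]; omega)).symm

def BraidGroup.revHom (m : ℕ) : BraidGroup m →* BraidGroup m :=
  PresentedGroup.toGroup lift_braidGen_rev_eq_one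

@[simp] theorem BraidGroup.revHom_braidGen {m : ℕ} (i : Fin m) :
    BraidGroup.revHom m (braidGen i) = braidGen i.rev :=
  PresentedGroup.toGroup.of lift_braidGen_rev_eq_one

theorem BraidGroup.revHom_comp_revHom (m : ℕ) :
    (BraidGroup.revHom m).comp (BraidGroup.revHom m) = MonoidHom.id _ :=
  PresentedGroup.ext fun i => by
    change BraidGroup.revHom m (BraidGroup.revHom m (braidGen i)) = braidGen i
    rw [BraidGroup.revHom_braidGen, BraidGroup.revHom_braidGen, Fin.rev_rev]

def BraidGroup.rev (m : ℕ) : BraidGroup m ≃* BraidGroup m :=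
  (BraidGroup.revHom m).toMulEquiv (BraidGroup.revHom m) (BraidGroup.revHom_comp_revHom m)
    (BraidGroup.revHom_comp_revHom m)

theorem PresentedGroup.equivariant_of_forall_of {ι α G : Type*} [Group G]
    {rels : Set (FreeGroup ι)} (ρ' : PresentedGroup rels →* MulAut (FreeGroup α))
    (ρ : PresentedGroup rels →* MulAut G) (φ : FreeGroup α ≃* G)
    (h : ∀ s a, φ (ρ' (.of s) (.of a)) = ρ (.of s) (φ (.of a)))
    (β : PresentedGroup rels) (g : FreeGroup α) : φ (ρ' β g) = ρ β (φ g) := by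
  have hcomp : (MulAut.congr φ).toMonoidHom.comp ρ' = ρ := by
    refine PresentedGroup.ext fun s => MulEquiv.ext fun x => ?_
    have hs := FreeGroup.ext_hom (φ.toMonoidHom.comp (ρ' (.of s)).toMonoidHom)
      ((ρ (.of s)).toMonoidHom.comp φ.toMonoidHom) (h s)
    obtain ⟨y, rfl⟩ := φ.surjective x
    simpa [MulAut.congr] using DFunLike.congr_fun hs y
  rw [← hcomp]
  simp [MulAut.congr]

theorem List.finRange_take_succ {n i : ℕ} (h : i < n) :
    (List.finRange n).take (i + 1) = (List.finRange n).take i ++ [⟨i, h⟩] := by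
  rw [List.take_add_one, List.getElem?_eq_getElem (by simpa using h)]
  simp

def sqPrefix (n i : ℕ) : FreeGroup (Fin n) :=
  (((List.finRange n).take i).map (fun t => FreeGroup.of t ^ 2)).prod

theorem wadaY_eq_sqPrefix_mul {n : ℕ} (j : Fin n) : wadaY j = sqPrefix n j * FreeGroup.of j :=
  rfl

theorem sqPrefix_succ {n : ℕ} (j : Fin n) :
    sqPrefix n (j + 1) = sqPrefix n j * FreeGroup.of j ^ 2 := by
  simp [sqPrefix, List.finRange_take_succ j.2]

theorem sqPrefix_idx1 {n : ℕ} (k : Fin (n - 1)) :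
    sqPrefix n (idx1 k) = sqPrefix n (idx0 k) * .of (idx0 k) ^ 2 :=
  sqPrefix_succ (idx0 k)

-- The word that becomes `sqPrefix n i` under `xⱼ ↦ yⱼ`, by
-- `sqPrefix n (j + 1) = yⱼ (sqPrefix n j)⁻¹ yⱼ`.
def sqPrefixWord (n i : ℕ) : FreeGroup (Fin n) :=
  ((List.finRange n).take i).foldl (fun q t => FreeGroup.of t * q⁻¹ * FreeGroup.of t) 1

theorem sqPrefixWord_succ {n : ℕ} (j : Fin n) :
    sqPrefixWord n (j + 1) = FreeGroup.of j * (sqPrefixWord n j)⁻¹ * FreeGroup.of j := by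
  simp [sqPrefixWord, List.finRange_take_succ j.2]

def wadaYHom (n : ℕ) : FreeGroup (Fin n) →* FreeGroup (Fin n) :=
  FreeGroup.lift wadaY

def wadaYInvHom (n : ℕ) : FreeGroup (Fin n) →* FreeGroup (Fin n) :=
  FreeGroup.lift fun j => (sqPrefixWord n j)⁻¹ * FreeGroup.of j

@[simp] theorem wadaYHom_of {n : ℕ} (j : Fin n) : wadaYHom n (.of j) = wadaY j :=
  FreeGroup.lift_apply_of

@[simp] theorem wadaYInvHom_of {n : ℕ} (j : Fin n) :
    wadaYInvHom n (.of j) = (sqPrefixWord n j)⁻¹ * .of j :=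
  FreeGroup.lift_apply_of

theorem wadaYHom_sqPrefixWord {n i : ℕ} (hi : i ≤ n) :
    wadaYHom n (sqPrefixWord n i) = sqPrefix n i := by
  induction i with
  | zero => exact map_one _
  | succ i ih =>
    rw [sqPrefixWord_succ ⟨i, hi⟩, sqPrefix_succ ⟨i, hi⟩, map_mul, map_mul, map_inv, ih (by omega),
      wadaYHom_of, wadaY_eq_sqPrefix_mul, sq]
    group

theorem wadaYInvHom_sqPrefix {n i : ℕ} (hi : i ≤ n) :
    wadaYInvHom n (sqPrefix n i) = sqPrefixWord n i := by
  induction i with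
  | zero => exact map_one _
  | succ i ih =>
    rw [sqPrefixWord_succ ⟨i, hi⟩, sqPrefix_succ ⟨i, hi⟩, map_mul, map_pow, ih (by omega),
      wadaYInvHom_of, sq]
    group

def wadaYEquiv (n : ℕ) : FreeGroup (Fin n) ≃* FreeGroup (Fin n) :=
  (wadaYHom n).toMulEquiv (wadaYInvHom n)
    (FreeGroup.ext_hom _ _ fun j => by
      rw [MonoidHom.comp_apply, wadaYHom_of, wadaY_eq_sqPrefix_mul, map_mul,
        wadaYInvHom_sqPrefix j.2.le, wadaYInvHom_of, MonoidHom.id_apply]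
      group)
    (FreeGroup.ext_hom _ _ fun j => by
      rw [MonoidHom.comp_apply, wadaYInvHom_of, map_mul, map_inv, wadaYHom_sqPrefixWord j.2.le,
        wadaYHom_of, wadaY_eq_sqPrefix_mul, MonoidHom.id_apply]
      group)

def wadaEquiv (n : ℕ) : FreeGroup (Fin n) ≃* FreeGroup (Fin n) :=
  (FreeGroup.freeGroupCongr Fin.revPerm).trans (wadaYEquiv n)

@[simp] theorem wadaEquiv_of {n : ℕ} (i : Fin n) : wadaEquiv n (.of i) = wadaY i.rev := by
  simp [wadaEquiv, wadaYEquiv, FreeGroup.freeGroupCongr_apply]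

section Wada3

variable {n : ℕ} {ρ : BraidGroup (n - 1) →* MulAut (FreeGroup (Fin n))}

theorem IsWada3.map_of_ne (hρ : IsWada3 ρ) (k : Fin (n - 1)) {j : Fin n}
    (h₀ : (j : ℕ) ≠ k) (h₁ : (j : ℕ) ≠ k + 1) : ρ (braidGen k) (.of j) = .of j :=
  (hρ k).2.2 j (Fin.ne_of_val_ne h₀) (Fin.ne_of_val_ne h₁)

theorem IsWada3.map_sqPrefix_of_le (hρ : IsWada3 ρ) (k : Fin (n - 1)) {i : ℕ} (hi : i ≤ k) :
    ρ (braidGen k) (sqPrefix n i) = sqPrefix n i := by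
  induction i with
  | zero => exact map_one _
  | succ i ih =>
    have hin : i < n := by omega
    rw [sqPrefix_succ ⟨i, hin⟩, map_mul, map_pow, ih (by omega),
      hρ.map_of_ne k (by simp only; omega) (by simp only; omega)]

theorem IsWada3.map_sqPrefix_idx1 (hρ : IsWada3 ρ) (k : Fin (n - 1)) :
    ρ (braidGen k) (sqPrefix n (idx1 k)) =
      sqPrefix n (idx0 k) * (.of (idx0 k) ^ 2 * .of (idx1 k)) ^ 2 := by
  rw [sqPrefix_idx1, map_mul, map_pow, hρ.map_sqPrefix_of_le k (i := idx0 k) le_rfl, (hρ k).1]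

theorem IsWada3.map_sqPrefix_of_ge (hρ : IsWada3 ρ) (k : Fin (n - 1)) {i : ℕ}
    (hki : (k : ℕ) + 2 ≤ i) (hi : i ≤ n) : ρ (braidGen k) (sqPrefix n i) = sqPrefix n i := by
  induction i, hki using Nat.le_induction with
  | base =>
    rw [show sqPrefix n (k + 2) = sqPrefix n (idx1 k) * .of (idx1 k) ^ 2 from
        sqPrefix_succ (idx1 k),
      map_mul, map_pow, hρ.map_sqPrefix_idx1, (hρ k).2.1, sqPrefix_idx1]
    simp only [sq]
    group
  | succ i hki ih =>
    have hin : i < n := by omega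
    rw [sqPrefix_succ ⟨i, hin⟩, map_mul, map_pow, ih (by omega),
      hρ.map_of_ne k (by simp only; omega) (by simp only; omega)]

theorem IsWada3.map_wadaY_of_ne (hρ : IsWada3 ρ) (k : Fin (n - 1)) {j : Fin n}
    (h₀ : j ≠ idx0 k) (h₁ : j ≠ idx1 k) : ρ (braidGen k) (wadaY j) = wadaY j := by
  have h₀' : (j : ℕ) ≠ k := fun h => h₀ (Fin.ext h)
  have h₁' : (j : ℕ) ≠ k + 1 := fun h => h₁ (Fin.ext h)
  rw [wadaY_eq_sqPrefix_mul, map_mul, hρ.map_of_ne k h₀' h₁']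
  rcases lt_or_gt_of_ne h₀' with hj | hj
  · rw [hρ.map_sqPrefix_of_le k hj.le]
  · rw [hρ.map_sqPrefix_of_ge k (by omega) j.2.le]

theorem IsWada3.map_wadaY_idx0 (hρ : IsWada3 ρ) (k : Fin (n - 1)) :
    ρ (braidGen k) (wadaY (idx0 k)) = wadaY (idx1 k) := by
  rw [wadaY_eq_sqPrefix_mul, wadaY_eq_sqPrefix_mul, map_mul,
    hρ.map_sqPrefix_of_le k (i := idx0 k) le_rfl, (hρ k).1, sqPrefix_idx1]
  group

theorem IsWada3.map_wadaY_idx1 (hρ : IsWada3 ρ) (k : Fin (n - 1)) :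
    ρ (braidGen k) (wadaY (idx1 k)) = wadaY (idx1 k) * (wadaY (idx0 k))⁻¹ * wadaY (idx1 k) := by
  rw [wadaY_eq_sqPrefix_mul, wadaY_eq_sqPrefix_mul, map_mul, hρ.map_sqPrefix_idx1, (hρ k).2.1,
    sqPrefix_idx1]
  simp only [sq]
  group

end Wada3

theorem idx0_rev {n : ℕ} (k : Fin (n - 1)) : idx0 k.rev = (idx1 k).rev := by
  ext; simp only [idx0, idx1, Fin.val_rev]; omega

theorem idx1_rev {n : ℕ} (k : Fin (n - 1)) : idx1 k.rev = (idx0 k).rev := by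
  ext; simp only [idx0, idx1, Fin.val_rev]; omega

theorem wadaEquiv_wada2_braidGen_rev {n : ℕ}
    {ρ₂ ρ₃ : BraidGroup (n - 1) →* MulAut (FreeGroup (Fin n))}
    (hρ₂ : IsWada2 ρ₂) (hρ₃ : IsWada3 ρ₃) (k : Fin (n - 1)) (j : Fin n) :
    wadaEquiv n (ρ₂ (braidGen k.rev) (.of j)) = ρ₃ (braidGen k) (wadaEquiv n (.of j)) := by
  obtain ⟨h₀, h₁, hfix⟩ := hρ₂ k.rev
  rw [idx0_rev, idx1_rev] at h₀ h₁ hfix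
  obtain ⟨i, rfl⟩ := Fin.rev_surjective j
  rw [wadaEquiv_of, Fin.rev_rev]
  by_cases hi₀ : i = idx0 k
  · subst hi₀
    rw [h₁, wadaEquiv_of, Fin.rev_rev, hρ₃.map_wadaY_idx0]
  by_cases hi₁ : i = idx1 k
  · subst hi₁
    rw [h₀, map_mul, map_mul, map_inv, wadaEquiv_of, wadaEquiv_of, Fin.rev_rev, Fin.rev_rev,
      hρ₃.map_wadaY_idx1]
  rw [hfix i.rev (Fin.rev_injective.ne hi₁) (Fin.rev_injective.ne hi₀), wadaEquiv_of,
    Fin.rev_rev, hρ₃.map_wadaY_of_ne k hi₀ hi₁]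

theorem wada2_equiv_wada3_general (n : ℕ)
    (ρ₂ ρ₃ : BraidGroup (n - 1) →* MulAut (FreeGroup (Fin n)))
    (hρ₂ : IsWada2 ρ₂) (hρ₃ : IsWada3 ρ₃) :
    ∃ (φ : FreeGroup (Fin n) ≃* FreeGroup (Fin n))
      (μ : BraidGroup (n - 1) ≃* BraidGroup (n - 1)),
      (∀ i : Fin n, φ (FreeGroup.of i) = wadaY i.rev) ∧
      (∀ k : Fin (n - 1), μ (braidGen k) = braidGen k.rev) ∧
      ∀ (β : BraidGroup (n - 1)) (g : FreeGroup (Fin n)),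
        ρ₂ (μ β) g = φ.symm (ρ₃ β (φ g)) := by
  refine ⟨wadaEquiv n, BraidGroup.rev (n - 1), wadaEquiv_of, BraidGroup.revHom_braidGen,
    fun β g => ?_⟩
  rw [MulEquiv.eq_symm_apply]
  exact PresentedGroup.equivariant_of_forall_of (ρ₂.comp (BraidGroup.rev (n - 1)).toMonoidHom)
    ρ₃ (wadaEquiv n) (wadaEquiv_wada2_braidGen_rev hρ₂ hρ₃) β g

theorem wada2_equiv_wada3 (n : ℕ) (hn : 2 ≤ n)
    (ρ₂ ρ₃ : BraidGroup (n - 1) →* MulAut (FreeGroup (Fin n)))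
    (hρ₂ : IsWada2 ρ₂) (hρ₃ : IsWada3 ρ₃) :
    ∃ (φ : FreeGroup (Fin n) ≃* FreeGroup (Fin n))
      (μ : BraidGroup (n - 1) ≃* BraidGroup (n - 1)),
      (∀ i : Fin n, φ (FreeGroup.of i) = wadaY i.rev) ∧
      (∀ k : Fin (n - 1), μ (braidGen k) = braidGen k.rev) ∧
      ∀ (β : BraidGroup (n - 1)) (g : FreeGroup (Fin n)),
        ρ₂ (μ β) g = φ.symm (ρ₃ β (φ g)) :=
  wada2_equiv_wada3_general n ρ₂ ρ₃ hρ₂ hρ₃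
end
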